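/- arXiv:1410.7098 — 10 statements merged into one kernel-verified Lean document; each statement's English description precedes it below -/
import Mathlib

section
/- Weighted Hall's lemma: Let G = (V₁ ∪ V₂, E) be a finite bipartite graph with positive real weights w(v) on the vertices. If for every subset U ⊆ V₁ one has w(U) ≤ w(N(U)), where N(U) is the neighborhood of U in V₂ and w(S) = Σ_{s∈S} w(s), then there exists a nonnegative edge labeling γ : E → ℝ≥0 such that Σ_{t∈N(s)} γ(s,t) = w(s) for every s ∈ V₁ and Σ_{s∈N(t)} γ(s,t) ≤ w(t) for every t ∈ V₂. -/
/-!
Allow zero weights and induct on the number of positive ones. If a set `U ⊆ V₁` is tight,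
`w(U) = w(N(U))`, the problem splits into the part on `U × N(U)` and the rest; the rest satisfies
the Hall condition by inclusion–exclusion, because `N(W ∪ U) = N(W) ∪ N(U)`. Otherwise take an edge
`(s₀, t₀)` with `w(s₀), w(t₀) > 0` and put on it the largest `δ` for which the residual weights
still satisfy the Hall condition: either `s₀` or `t₀` is then exhausted, or some `U ∌ s₀` with
`t₀ ∈ N(U)` becomes tight and the residual problem splits.
-/

open scoped Classical

open Finset

namespace WeightedHall

variable {V₁ V₂ : Type*} [Fintype V₂] (E : Finset (V₁ × V₂))

noncomputable def nbhd (U : Finset V₁) : Finset V₂ :=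
  univ.filter fun t => ∃ s ∈ U, (s, t) ∈ E

def HallCondition (a : V₁ → ℝ) (b : V₂ → ℝ) : Prop :=
  ∀ U : Finset V₁, ∑ s ∈ U, a s ≤ ∑ t ∈ nbhd E U, b t

structure IsFeasibleLabeling [Fintype V₁] (a : V₁ → ℝ) (b : V₂ → ℝ) (γ : V₁ × V₂ → ℝ) :
    Prop where
  nonneg : 0 ≤ γ
  eq_zero_of_notMem : ∀ p, p ∉ E → γ p = 0
  sum_row : ∀ s, ∑ t ∈ univ.filter (fun t => (s, t) ∈ E), γ (s, t) = a s
  sum_col_le : ∀ t, ∑ s ∈ univ.filter (fun s => (s, t) ∈ E), γ (s, t) ≤ b t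

variable {E}

theorem mem_nbhd {U : Finset V₁} {t : V₂} : t ∈ nbhd E U ↔ ∃ s ∈ U, (s, t) ∈ E := by
  simp [nbhd]

theorem nbhd_mono {U W : Finset V₁} (h : U ⊆ W) : nbhd E U ⊆ nbhd E W :=
  fun _ ht => mem_nbhd.2 <| (mem_nbhd.1 ht).imp fun _ ⟨hs, he⟩ => ⟨h hs, he⟩

theorem nbhd_union (U W : Finset V₁) : nbhd E (U ∪ W) = nbhd E U ∪ nbhd E W := by
  ext t
  simp only [mem_union, mem_nbhd, or_and_right, exists_or]

namespace HallCondition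

variable {a : V₁ → ℝ} {b : V₂ → ℝ}

theorem exists_edge_pos (hH : HallCondition E a b) {s₀ : V₁} (ha₀ : 0 < a s₀) :
    ∃ t, (s₀, t) ∈ E ∧ 0 < b t := by
  have hsum : ∑ _t ∈ nbhd E {s₀}, (0 : ℝ) < ∑ t ∈ nbhd E {s₀}, b t := by
    simpa using ha₀.trans_le (by simpa using hH {s₀})
  obtain ⟨t, ht, hbt⟩ := exists_lt_of_sum_lt hsum
  exact ⟨t, by simpa using mem_nbhd.1 ht, hbt⟩

theorem restrict (hH : HallCondition E a b) (hb : 0 ≤ b) (U : Finset V₁) :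
    HallCondition E (fun s => if s ∈ U then a s else 0)
      (fun t => if t ∈ nbhd E U then b t else 0) := by
  intro W
  rw [sum_ite_mem, sum_ite_mem]
  calc ∑ s ∈ W ∩ U, a s ≤ ∑ t ∈ nbhd E (W ∩ U), b t := hH _
    _ ≤ ∑ t ∈ nbhd E W ∩ nbhd E U, b t :=
      sum_le_sum_of_subset_of_nonneg
        (subset_inter (nbhd_mono inter_subset_left) (nbhd_mono inter_subset_right))
        fun t _ _ => hb t

theorem sub_restrict (hH : HallCondition E a b) {U : Finset V₁}
    (htight : ∑ s ∈ U, a s = ∑ t ∈ nbhd E U, b t) :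
    HallCondition E (a - fun s => if s ∈ U then a s else 0)
      (b - fun t => if t ∈ nbhd E U then b t else 0) := by
  intro W
  simp only [Pi.sub_apply, sum_sub_distrib, sum_ite_mem]
  have hunion := hH (W ∪ U)
  rw [nbhd_union] at hunion
  linarith [sum_union_inter (s₁ := W) (s₂ := U) (f := a),
    sum_union_inter (s₁ := nbhd E W) (s₂ := nbhd E U) (f := b)]

theorem sub_single (hH : HallCondition E a b) {s₀ : V₁} {t₀ : V₂} (he : (s₀, t₀) ∈ E) {δ : ℝ}
    (hslack : ∀ U, s₀ ∉ U → t₀ ∈ nbhd E U → δ + ∑ s ∈ U, a s ≤ ∑ t ∈ nbhd E U, b t) :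
    HallCondition E (a - Pi.single s₀ δ) (b - Pi.single t₀ δ) := by
  intro U
  simp only [Pi.sub_apply, sum_sub_distrib, sum_pi_single']
  by_cases hs : s₀ ∈ U
  · have ht : t₀ ∈ nbhd E U := mem_nbhd.2 ⟨s₀, hs, he⟩
    simp only [if_pos hs, if_pos ht]
    linarith [hH U]
  by_cases ht : t₀ ∈ nbhd E U
  · simp only [if_neg hs, if_pos ht]
    linarith [hslack U hs ht]
  · simp only [if_neg hs, if_neg ht]
    linarith [hH U]

theorem exists_maximal_push [Fintype V₁] (hH : HallCondition E a b) {s₀ : V₁} {t₀ : V₂}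
    (ha₀ : 0 < a s₀) (hb₀ : 0 < b t₀) :
    ∃ δ, 0 ≤ δ ∧ δ ≤ a s₀ ∧ δ ≤ b t₀ ∧
      (∀ U, s₀ ∉ U → t₀ ∈ nbhd E U → δ + ∑ s ∈ U, a s ≤ ∑ t ∈ nbhd E U, b t) ∧
      (δ = a s₀ ∨ δ = b t₀ ∨
        ∃ U, s₀ ∉ U ∧ t₀ ∈ nbhd E U ∧ δ + ∑ s ∈ U, a s = ∑ t ∈ nbhd E U, b t) := by
  set slacks := (univ.filter fun U : Finset V₁ => s₀ ∉ U ∧ t₀ ∈ nbhd E U).image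
    fun U => ∑ t ∈ nbhd E U, b t - ∑ s ∈ U, a s
  set C := insert (a s₀) (insert (b t₀) slacks)
  have hC : C.Nonempty := insert_nonempty _ _
  have mem_slacks {U} (hs : s₀ ∉ U) (ht : t₀ ∈ nbhd E U) :
      ∑ t ∈ nbhd E U, b t - ∑ s ∈ U, a s ∈ C :=
    mem_insert_of_mem <| mem_insert_of_mem <| mem_image_of_mem _ <| by simp [hs, ht]
  refine ⟨C.min' hC, le_min' _ _ _ ?_, min'_le _ _ (mem_insert_self _ _),
    min'_le _ _ (mem_insert_of_mem (mem_insert_self _ _)), fun U hs ht => ?_, ?_⟩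
  · simp only [C, slacks, mem_insert, mem_image]
    rintro y (rfl | rfl | ⟨U, -, rfl⟩)
    exacts [ha₀.le, hb₀.le, sub_nonneg.2 (hH U)]
  · linarith [min'_le C _ (mem_slacks hs ht)]
  · rcases mem_insert.1 (min'_mem C hC) with h | h
    · exact Or.inl h
    rcases mem_insert.1 h with h | h
    · exact Or.inr (Or.inl h)
    obtain ⟨U, hU, hδ⟩ := mem_image.1 h
    simp only [mem_filter, mem_univ, true_and] at hU
    exact Or.inr (Or.inr ⟨U, hU.1, hU.2, by linarith⟩)

end HallCondition

variable [Fintype V₁] {a a' : V₁ → ℝ} {b b' : V₂ → ℝ}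

namespace IsFeasibleLabeling

theorem zero (hb : 0 ≤ b) : IsFeasibleLabeling E 0 b 0 where
  nonneg := le_rfl
  eq_zero_of_notMem _ _ := rfl
  sum_row _ := sum_const_zero
  sum_col_le t := sum_const_zero.trans_le (hb t)

theorem add {γ γ' : V₁ × V₂ → ℝ} (h : IsFeasibleLabeling E a b γ)
    (h' : IsFeasibleLabeling E a' b' γ') : IsFeasibleLabeling E (a + a') (b + b') (γ + γ') where
  nonneg := add_nonneg h.nonneg h'.nonneg
  eq_zero_of_notMem p hp := by simp [h.eq_zero_of_notMem p hp, h'.eq_zero_of_notMem p hp]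
  sum_row s := by simp only [Pi.add_apply, sum_add_distrib, h.sum_row, h'.sum_row]
  sum_col_le t := by
    simpa only [Pi.add_apply, sum_add_distrib] using add_le_add (h.sum_col_le t) (h'.sum_col_le t)

theorem single {s₀ : V₁} {t₀ : V₂} (he : (s₀, t₀) ∈ E) {δ : ℝ} (hδ : 0 ≤ δ) :
    IsFeasibleLabeling E (Pi.single s₀ δ) (Pi.single t₀ δ) (Pi.single (s₀, t₀) δ) where
  nonneg := Pi.single_nonneg.2 hδ
  eq_zero_of_notMem p hp := Pi.single_eq_of_ne (by rintro rfl; exact hp he) _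
  sum_row s := by
    by_cases hs : s = s₀
    · subst hs
      simp [Pi.single_apply, he]
    · simp [hs]
  sum_col_le t := by
    by_cases ht : t = t₀
    · subst ht
      simp [Pi.single_apply, he]
    · simp [ht]

end IsFeasibleLabeling

theorem card_pos_le_of_le {α : Type*} [Fintype α] {f g : α → ℝ} (h : f ≤ g) :
    #{x | 0 < f x} ≤ #{x | 0 < g x} :=
  card_le_card <| monotone_filter_right _ fun x _ hx => hx.trans_le (h x)

theorem card_pos_lt_of_le {α : Type*} [Fintype α] {f g : α → ℝ} (h : f ≤ g) {x : α}
    (hg : 0 < g x) (hf : f x ≤ 0) : #{x | 0 < f x} < #{x | 0 < g x} := by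
  refine card_lt_card ⟨monotone_filter_right _ fun y _ hy => hy.trans_le (h y), fun hsub => ?_⟩
  have := hsub (mem_filter.2 ⟨mem_univ x, hg⟩)
  simp only [mem_filter, mem_univ, true_and] at this
  linarith

variable (a b) in
noncomputable def numPos : ℕ :=
  #{s | 0 < a s} + #{t | 0 < b t}

theorem numPos_le (ha : a' ≤ a) (hb : b' ≤ b) : numPos a' b' ≤ numPos a b :=
  add_le_add (card_pos_le_of_le ha) (card_pos_le_of_le hb)

theorem numPos_lt_of_left (ha : a' ≤ a) (hb : b' ≤ b) {s : V₁} (hs : 0 < a s) (hs' : a' s ≤ 0) :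
    numPos a' b' < numPos a b :=
  add_lt_add_of_lt_of_le (card_pos_lt_of_le ha hs hs') (card_pos_le_of_le hb)

theorem numPos_lt_of_right (ha : a' ≤ a) (hb : b' ≤ b) {t : V₂} (ht : 0 < b t) (ht' : b' t ≤ 0) :
    numPos a' b' < numPos a b :=
  add_lt_add_of_le_of_lt (card_pos_le_of_le ha) (card_pos_lt_of_le hb ht ht')

variable (E) in
def SolvableBelow (n : ℕ) : Prop :=
  ∀ (a : V₁ → ℝ) (b : V₂ → ℝ), numPos a b < n → 0 ≤ a → 0 ≤ b → HallCondition E a b →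
    ∃ γ, IsFeasibleLabeling E a b γ

theorem SolvableBelow.mono {m n : ℕ} (h : SolvableBelow E n) (hmn : m ≤ n) : SolvableBelow E m :=
  fun a b hab => h a b (hab.trans_le hmn)

theorem exists_isFeasibleLabeling_of_tight (ih : SolvableBelow E (numPos a b)) (ha : 0 ≤ a)
    (hb : 0 ≤ b) (hH : HallCondition E a b) {U : Finset V₁}
    (htight : ∑ s ∈ U, a s = ∑ t ∈ nbhd E U, b t) {s₀ : V₁} (hs₀ : s₀ ∉ U) (ha₀ : 0 < a s₀) {t₀ : V₂} (ht₀ : t₀ ∈ nbhd E U) (hb₀ : 0 < b t₀) :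
    ∃ γ, IsFeasibleLabeling E a b γ := by
  set aU : V₁ → ℝ := fun s => if s ∈ U then a s else 0
  set bU : V₂ → ℝ := fun t => if t ∈ nbhd E U then b t else 0
  have haU : 0 ≤ aU := fun s => by dsimp only [aU]; split_ifs; exacts [ha s, le_rfl]
  have hbU : 0 ≤ bU := fun t => by dsimp only [bU]; split_ifs; exacts [hb t, le_rfl]
  have haU_le : aU ≤ a := fun s => by dsimp only [aU]; split_ifs; exacts [le_rfl, ha s]
  have hbU_le : bU ≤ b := fun t => by dsimp only [bU]; split_ifs; exacts [le_rfl, hb t]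
  -- the restriction to `U × N(U)` loses the positive weight at `s₀`, the remainder that at `t₀`
  obtain ⟨γ, hγ⟩ := ih aU bU (numPos_lt_of_left haU_le hbU_le ha₀ (by simp [aU, hs₀]))
    haU hbU (hH.restrict hb U)
  obtain ⟨γ', hγ'⟩ := ih (a - aU) (b - bU)
    (numPos_lt_of_right (sub_le_self _ haU) (sub_le_self _ hbU) hb₀ (by simp [bU, ht₀]))
    (sub_nonneg.2 haU_le) (sub_nonneg.2 hbU_le) (hH.sub_restrict htight)
  exact ⟨γ + γ', by simpa using hγ.add hγ'⟩

theorem exists_isFeasibleLabeling_of_pos (ih : SolvableBelow E (numPos a b)) (ha : 0 ≤ a)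
    (hb : 0 ≤ b) (hH : HallCondition E a b) {s₀ : V₁} (ha₀ : 0 < a s₀) :
    ∃ γ, IsFeasibleLabeling E a b γ := by
  obtain ⟨t₀, he, hb₀⟩ := hH.exists_edge_pos ha₀
  obtain ⟨δ, hδ, hδa, hδb, hslack, hcases⟩ := hH.exists_maximal_push ha₀ hb₀
  set a' := a - Pi.single s₀ δ
  set b' := b - Pi.single t₀ δ
  have ha' : 0 ≤ a' := fun s => by
    by_cases hs : s = s₀
    · subst hs; simpa [a'] using hδa
    · simpa [a', hs] using ha s
  have hb' : 0 ≤ b' := fun t => by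
    by_cases ht : t = t₀
    · subst ht; simpa [b'] using hδb
    · simpa [b', ht] using hb t
  have ha'_le : a' ≤ a := sub_le_self _ (Pi.single_nonneg.2 hδ)
  have hb'_le : b' ≤ b := sub_le_self _ (Pi.single_nonneg.2 hδ)
  have hH' := hH.sub_single he hslack
  obtain ⟨γ', hγ'⟩ : ∃ γ', IsFeasibleLabeling E a' b' γ' := by
    obtain hδa | hδa := hδa.eq_or_lt
    · exact ih a' b' (numPos_lt_of_left ha'_le hb'_le ha₀ (by simp [a', hδa])) ha' hb' hH'
    obtain hδb | hδb := hδb.eq_or_lt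
    · exact ih a' b' (numPos_lt_of_right ha'_le hb'_le hb₀ (by simp [b', hδb])) ha' hb' hH'
    obtain ⟨U, hs₀, ht₀, htight⟩ := (hcases.resolve_left hδa.ne).resolve_left hδb.ne
    refine exists_isFeasibleLabeling_of_tight (ih.mono (numPos_le ha'_le hb'_le)) ha' hb' hH' ?_
      hs₀ (by simpa [a'] using hδa) ht₀ (by simpa [b'] using hδb)
    simp only [a', b', Pi.sub_apply, sum_sub_distrib, sum_pi_single', if_neg hs₀, if_pos ht₀]
    linarith
  have h := hγ'.add (IsFeasibleLabeling.single he hδ)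
  rw [sub_add_cancel, sub_add_cancel] at h
  exact ⟨_, h⟩

theorem SolvableBelow.succ {n : ℕ} (ih : SolvableBelow E n) : SolvableBelow E (n + 1) := by
  intro a b hn ha hb hH
  by_cases hpos : ∃ s, 0 < a s
  · obtain ⟨s₀, ha₀⟩ := hpos
    exact exists_isFeasibleLabeling_of_pos (ih.mono (Nat.lt_succ_iff.1 hn)) ha hb hH ha₀
  · obtain rfl : a = 0 := funext fun s => le_antisymm (not_lt.1 (not_exists.1 hpos s)) (ha s)
    exact ⟨0, IsFeasibleLabeling.zero hb⟩

theorem solvableBelow (n : ℕ) : SolvableBelow E n := by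
  induction n with
  | zero => exact fun _ _ h => absurd h (Nat.not_lt_zero _)
  | succ n ih => exact ih.succ

theorem HallCondition.exists_isFeasibleLabeling (hH : HallCondition E a b) (ha : 0 ≤ a)
    (hb : 0 ≤ b) : ∃ γ, IsFeasibleLabeling E a b γ :=
  solvableBelow _ a b (Nat.lt_succ_self _) ha hb hH

end WeightedHall

/-- Weighted Hall's lemma: in a finite bipartite graph with positive vertex weights,
if `w(U) ≤ w(N(U))` for every `U ⊆ V₁`, then there exists a nonnegative edge labeling `γ`
saturating `V₁`. -/
theorem stmt1 {V₁ V₂ : Type*} [Fintype V₁] [Fintype V₂] (E : Finset (V₁ × V₂))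
    (w₁ : V₁ → ℝ) (w₂ : V₂ → ℝ) (hw₁ : ∀ s, 0 < w₁ s) (hw₂ : ∀ t, 0 < w₂ t)
    (hHall : ∀ U : Finset V₁,
      ∑ s ∈ U, w₁ s ≤ ∑ t ∈ Finset.univ.filter (fun t => ∃ s ∈ U, (s, t) ∈ E), w₂ t) :
    ∃ γ : V₁ × V₂ → ℝ,
      (∀ p, 0 ≤ γ p) ∧ (∀ p, p ∉ E → γ p = 0) ∧
      (∀ s, ∑ t ∈ Finset.univ.filter (fun t => (s, t) ∈ E), γ (s, t) = w₁ s) ∧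
      (∀ t, ∑ s ∈ Finset.univ.filter (fun s => (s, t) ∈ E), γ (s, t) ≤ w₂ t) := by
  obtain ⟨γ, hγ⟩ := WeightedHall.HallCondition.exists_isFeasibleLabeling (E := E) hHall
    (fun s => (hw₁ s).le) (fun t => (hw₂ t).le)
  exact ⟨γ, hγ.nonneg, hγ.eq_zero_of_notMem, hγ.sum_row, hγ.sum_col_le⟩
end

section
/- Let G = (V₁ ∪ V₂, E) be a finite bipartite graph with rational positive vertex weights satisfying w(U) ≤ w(N(U)) for all U ⊆ V₁. Then there exists a rational-valued nonnegative edge labeling γ saturating V₁, i.e., Σ_{t∈N(s)} γ(s,t) = w(s) for all s ∈ V₁ and Σ_{s∈N(t)} γ(s,t) ≤ w(t) for all t ∈ V₂. -/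
/-!
Clear denominators: with `N` a common denominator of all weights, `N w` is ℕ-valued and still
satisfies Hall's condition. Replace every vertex `v` by `N w(v)` copies, each copy of
`s` adjacent to every copy of each neighbour of `s`. Hall's condition for the weights is exactly
Hall's condition for this blown-up graph, so the classical marriage theorem matches all copies
of `V₁`. Counting the copies of `s` matched to copies of `t`, divided by `N`, gives `γ(s, t)`.
-/

open scoped Classical

open Finset

theorem exists_pos_nat_mul_eq_natCast {ι : Type*} [Fintype ι] (q : ι → ℚ) (hq : ∀ i, 0 ≤ q i) :
    ∃ N : ℕ, 0 < N ∧ ∀ i, ∃ m : ℕ, (m : ℚ) = N * q i := by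
  refine ⟨∏ i, (q i).den, prod_pos fun i _ => (q i).den_pos, fun i => ?_⟩
  obtain ⟨k, hk⟩ : (q i).den ∣ ∏ j, (q j).den := dvd_prod_of_mem _ (mem_univ i)
  lift (q i).num to ℕ using Rat.num_nonneg.mpr (hq i) with n hn
  refine ⟨k * n, ?_⟩
  rw [hk, Nat.cast_mul, Nat.cast_mul, mul_right_comm, Rat.den_mul_eq_num, ← hn]
  push_cast; ring

lemma card_filter_sigma_fst_eq {ι : Type*} {α : ι → Type*} [Fintype ι] [∀ i, Fintype (α i)]
    (i : ι) : #{a : Σ i, α i | a.1 = i} = Fintype.card (α i) := by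
  rw [← card_univ, ← card_map (Function.Embedding.sigmaMk i)]
  congr 1
  ext ⟨j, x⟩
  simp only [mem_filter, mem_univ, true_and, mem_map, Function.Embedding.sigmaMk_apply]
  constructor
  · rintro rfl; exact ⟨x, rfl⟩
  · rintro ⟨y, h⟩; cases h; rfl

section Blowup

variable {V₁ V₂ : Type*} [Fintype V₁] [Fintype V₂] (E : Finset (V₁ × V₂)) (m₁ : V₁ → ℕ)
  (m₂ : V₂ → ℕ)

theorem card_le_card_biUnion_blowup
    (hHall : ∀ U : Finset V₁, ∑ s ∈ U, m₁ s ≤ ∑ t with ∃ s ∈ U, (s, t) ∈ E, m₂ t)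
    (S : Finset (Σ s, Fin (m₁ s))) :
    #S ≤ #(S.biUnion fun a => {b : Σ t, Fin (m₂ t) | (a.1, b.1) ∈ E}) := by
  set U := S.image Sigma.fst
  have hcover : S ⊆ U.sigma fun _ => univ := fun a ha =>
    mem_sigma.2 ⟨mem_image_of_mem _ ha, mem_univ _⟩
  have hnbhd : ({t | ∃ s ∈ U, (s, t) ∈ E} : Finset V₂).sigma (fun _ => univ) =
      S.biUnion fun a => {b : Σ t, Fin (m₂ t) | (a.1, b.1) ∈ E} := by
    ext b; simp [U]
  calc #S ≤ ∑ s ∈ U, m₁ s := by simpa using card_le_card hcover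
    _ ≤ _ := hHall U
    _ = _ := by rw [← hnbhd]; simp

theorem exists_nat_saturating_labeling_of_hall
    (hHall : ∀ U : Finset V₁, ∑ s ∈ U, m₁ s ≤ ∑ t with ∃ s ∈ U, (s, t) ∈ E, m₂ t) :
    ∃ c : V₁ × V₂ → ℕ, (∀ p ∉ E, c p = 0) ∧ (∀ s, ∑ t, c (s, t) = m₁ s) ∧
      ∀ t, ∑ s, c (s, t) ≤ m₂ t := by
  obtain ⟨f, hf, hfE⟩ := (all_card_le_biUnion_card_iff_exists_injective _).1
    (card_le_card_biUnion_blowup E m₁ m₂ hHall)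
  simp only [mem_filter, mem_univ, true_and] at hfE
  refine ⟨fun p => #{a | a.1 = p.1 ∧ (f a).1 = p.2}, ?_, fun s => ?_, fun t => ?_⟩
  · rintro ⟨s, t⟩ hp
    rw [card_eq_zero, filter_eq_empty_iff]
    rintro a - ⟨rfl, rfl⟩
    exact hp (hfE a)
  · calc ∑ t, #{a | a.1 = s ∧ (f a).1 = t} = #{a : Σ s, Fin (m₁ s) | a.1 = s} := by
          simpa [filter_filter] using
            sum_card_fiberwise_eq_card_filter {a | a.1 = s} univ fun a => (f a).1
      _ = m₁ s := by simp [card_filter_sigma_fst_eq]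
  · calc ∑ s, #{a | a.1 = s ∧ (f a).1 = t} = #{a | (f a).1 = t} := by
          simpa [filter_filter, and_comm] using
            sum_card_fiberwise_eq_card_filter {a | (f a).1 = t} univ Sigma.fst
      _ ≤ #{b : Σ t, Fin (m₂ t) | b.1 = t} :=
          card_le_card_of_injOn f (fun a ha => by simpa using ha) hf.injOn
      _ = m₂ t := by simp [card_filter_sigma_fst_eq]

end Blowup

/-- Weighted Hall's lemma with rational weights: if the positive rational vertex weights
satisfy `w(U) ≤ w(N(U))` for all `U ⊆ V₁`, then there exists a rational-valued nonnegative
edge labeling `γ` saturating `V₁`. -/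
theorem stmt3 {V₁ V₂ : Type*} [Fintype V₁] [Fintype V₂] (E : Finset (V₁ × V₂))
    (w₁ : V₁ → ℚ) (w₂ : V₂ → ℚ) (hw₁ : ∀ s, 0 < w₁ s) (hw₂ : ∀ t, 0 < w₂ t)
    (hHall : ∀ U : Finset V₁,
      ∑ s ∈ U, w₁ s ≤ ∑ t ∈ Finset.univ.filter (fun t => ∃ s ∈ U, (s, t) ∈ E), w₂ t) :
    ∃ γ : V₁ × V₂ → ℚ,
      (∀ p, 0 ≤ γ p) ∧ (∀ p, p ∉ E → γ p = 0) ∧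
      (∀ s, ∑ t ∈ Finset.univ.filter (fun t => (s, t) ∈ E), γ (s, t) = w₁ s) ∧
      (∀ t, ∑ s ∈ Finset.univ.filter (fun s => (s, t) ∈ E), γ (s, t) ≤ w₂ t) := by
  obtain ⟨N, hN, hm⟩ := exists_pos_nat_mul_eq_natCast (Sum.elim w₁ w₂) <| by
    rintro (s | t) <;> simp [(hw₁ _).le, (hw₂ _).le]
  choose m hm using hm
  have hNQ : (0 : ℚ) < N := Nat.cast_pos.2 hN
  have hHallNat : ∀ U : Finset V₁,
      ∑ s ∈ U, m (.inl s) ≤ ∑ t with ∃ s ∈ U, (s, t) ∈ E, m (.inr t) := fun U => by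
    rw [← Nat.cast_le (α := ℚ)]
    push_cast
    simp only [hm, Sum.elim_inl, Sum.elim_inr, ← mul_sum]
    exact mul_le_mul_of_nonneg_left (hHall U) hNQ.le
  obtain ⟨c, hcE, hrow, hcol⟩ := exists_nat_saturating_labeling_of_hall E _ _ hHallNat
  have hsupp : ∀ p, (c p : ℚ) / N ≠ 0 → p ∈ E := fun p hp => by
    by_contra h; simp [hcE p h] at hp
  refine ⟨fun p => c p / N, fun p => by positivity, fun p hp => by simp [hcE p hp],
    fun s => ?_, fun t => ?_⟩
  · rw [sum_filter_of_ne fun t _ => hsupp (s, t), ← sum_div, ← Nat.cast_sum, hrow, hm]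
    simp [hNQ.ne']
  · rw [sum_filter_of_ne fun s _ => hsupp (s, t), ← sum_div, div_le_iff₀ hNQ, ← Nat.cast_sum]
    calc ((∑ s, c (s, t) : ℕ) : ℚ) ≤ m (.inr t) := by exact_mod_cast hcol t
      _ = w₂ t * N := by rw [hm]; simp [mul_comm]
end

section
/- Let G = (V,E) be a finite graph and F' ⊆ E a set of edges whose edge-induced subgraph is a single-cycle forest. Then for every U ⊆ V, Σ over edges e ∈ F' with e ∩ U ≠ ∅ of (|e ∩ U| − 1) is at most |U|. -/
/-!
For a two-element set `e`, `|e ∩ U| - 1` is `1` when `e ⊆ U` and `0` otherwise, so the sum counts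
the edges of `F'` inside `U`, and it suffices to bound, in each connected component `C` of the
forest, the number of edges inside `W = U ∩ C` by `|W|`. If `W` is nonempty, fix `r ∈ W` and send
every vertex `x ∈ C \ W` to the edge joining `x` to a neighbour strictly closer to `r`. This map is
injective and lands on edges of `C` not inside `W`, so `|C \ W| ≤ |E(C)| - |E(W)|`; together with
`|E(C)| ≤ |C|`, which is the single-cycle hypothesis, this gives `|E(W)| ≤ |W|`.
-/

open scoped Classical

/-- A graph is a single-cycle forest if every connected component contains at most one cycle. -/
def IsSingleCycleForest {W : Type*} (G : SimpleGraph W) : Prop :=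
  ∀ c : G.ConnectedComponent,
    {e ∈ G.edgeSet | ∀ v ∈ e, G.connectedComponentMk v = c}.ncard ≤
      {v : W | G.connectedComponentMk v = c}.ncard

/-- The graph on `V` whose edges are the two-element sets belonging to `F'`. -/
def pairGraph {V : Type*} [DecidableEq V] (F' : Finset (Finset V)) : SimpleGraph V where
  Adj u v := u ≠ v ∧ ({u, v} : Finset V) ∈ F'
  symm := by
    constructor
    intro u v h
    exact ⟨h.1.symm, by rw [Finset.pair_comm]; exact h.2⟩
  loopless := by
    constructor
    intro u h
    exact h.1 rfl

open Finset

theorem Sym2.toFinset_injective {α : Type*} [DecidableEq α] :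
    Function.Injective (Sym2.toFinset : Sym2 α → Finset α) :=
  fun _ _ h => Sym2.ext fun x => by rw [← Sym2.mem_toFinset, h, Sym2.mem_toFinset]

-- Truncated subtraction makes the left side `0` also when `e ∩ U` is empty.
theorem Finset.card_inter_sub_one_eq_ite {α : Type*} [DecidableEq α] {e : Finset α}
    (he : #e = 2) (U : Finset α) : #(e ∩ U) - 1 = if e ⊆ U then 1 else 0 := by
  have hle : #(e ∩ U) ≤ #e := card_le_card inter_subset_left
  split_ifs with hsub
  · rw [inter_eq_left.mpr hsub, he]
  · have hne : #(e ∩ U) ≠ #e := fun h =>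
      hsub (inter_eq_left.mp (eq_of_subset_of_card_le inter_subset_left h.ge))
    omega

namespace SimpleGraph

variable {V : Type*} {H : SimpleGraph V}

theorem Reachable.exists_adj_dist_lt {u v : V} (h : H.Reachable u v) (hne : u ≠ v) :
    ∃ w, H.Adj u w ∧ H.dist w v < H.dist u v := by
  obtain ⟨p, hp⟩ := h.exists_walk_length_eq_dist
  cases p with
  | nil => exact absurd rfl hne
  | cons hadj q =>
    refine ⟨_, hadj, ?_⟩
    have := H.dist_le q
    rw [← hp, Walk.length_cons]
    omega

theorem connectedComponentMk_eq_of_mem_edgeSet {e : Sym2 V} (he : e ∈ H.edgeSet) {u v : V}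
    (hu : u ∈ e) (hv : v ∈ e) : H.connectedComponentMk u = H.connectedComponentMk v := by
  induction e using Sym2.ind with
  | h a b =>
    have hab := ConnectedComponent.connectedComponentMk_eq_of_adj (H.mem_edgeSet.mp he)
    rcases Sym2.mem_iff.mp hu with rfl | rfl <;> rcases Sym2.mem_iff.mp hv with rfl | rfl <;>
      simp [hab]

variable [Fintype V] [DecidableEq V]

theorem card_outside_le_card_edges_leaving (c : H.ConnectedComponent) {W : Finset V} {r : V}
    (hr : r ∈ W) (hrc : H.connectedComponentMk r = c) :
    #{x | H.connectedComponentMk x = c ∧ x ∉ W} ≤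
      #{e ∈ H.edgeFinset | (∀ v ∈ e, H.connectedComponentMk v = c) ∧ ¬∀ v ∈ e, v ∈ W} := by
  have hcloser : ∀ x ∈ ({x | H.connectedComponentMk x = c ∧ x ∉ W} : Finset V),
      ∃ y, H.Adj x y ∧ H.dist y r < H.dist x r := by
    intro x hx
    obtain ⟨hxc, hxW⟩ := (mem_filter.mp hx).2
    exact (ConnectedComponent.exact (hxc.trans hrc.symm)).exists_adj_dist_lt
      (ne_of_mem_of_not_mem hr hxW).symm
  choose! parent hadj hdist using hcloser
  refine card_le_card_of_injOn (fun x => s(x, parent x)) (fun x hx => ?_) (fun x hx y hy hxy => ?_)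
  · obtain ⟨hxc, hxW⟩ := (mem_filter.mp hx).2
    have hpc : H.connectedComponentMk (parent x) = c :=
      (ConnectedComponent.connectedComponentMk_eq_of_adj (hadj x hx)).symm.trans hxc
    simp only [coe_filter, Set.mem_ofPred_eq, mem_edgeFinset, mem_edgeSet, Sym2.mem_iff,
      forall_eq_or_imp, forall_eq]
    exact ⟨hadj x hx, ⟨hxc, hpc⟩, fun h => hxW h.1⟩
  · rcases Sym2.eq_iff.mp hxy with ⟨heq, -⟩ | ⟨hx', hy'⟩
    · exact heq
    · have hx_far := hdist x hx
      have hy_far := hdist y hy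
      rw [hy'] at hx_far
      rw [← hx'] at hy_far
      omega

theorem card_edges_subset_le_of_card_edges_le (c : H.ConnectedComponent)
    (hc : #{e ∈ H.edgeFinset | ∀ v ∈ e, H.connectedComponentMk v = c} ≤
      #{v | H.connectedComponentMk v = c}) (U : Finset V) :
    #{e ∈ H.edgeFinset | (∀ v ∈ e, H.connectedComponentMk v = c) ∧ ∀ v ∈ e, v ∈ U} ≤
      #{v ∈ U | H.connectedComponentMk v = c} := by
  by_cases hU : ∃ r ∈ U, H.connectedComponentMk r = c
  · obtain ⟨r, hr, hrc⟩ := hU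
    have hleaving := card_outside_le_card_edges_leaving c hr hrc
    have hedges := card_filter_add_card_filter_not (s := H.edgeFinset.filter
      fun e => ∀ v ∈ e, H.connectedComponentMk v = c) (fun e => ∀ v ∈ e, v ∈ U)
    have hverts := card_filter_add_card_filter_not
      (s := univ.filter fun v => H.connectedComponentMk v = c) (· ∈ U)
    simp only [filter_filter] at hedges hverts
    have hinside : #{v | H.connectedComponentMk v = c ∧ v ∈ U} =
        #{v ∈ U | H.connectedComponentMk v = c} := by
      congr 1; ext v; simp [and_comm]
    omega
  · refine (card_eq_zero.mpr (filter_eq_empty_iff.mpr fun e _ ⟨hec, heU⟩ => hU ?_)).trans_le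
      (Nat.zero_le _)
    exact ⟨_, heU _ (Sym2.out_fst_mem e), hec _ (Sym2.out_fst_mem e)⟩

theorem card_edges_subset_le
    (hH : ∀ c : H.ConnectedComponent, #{e ∈ H.edgeFinset | ∀ v ∈ e, H.connectedComponentMk v = c} ≤
      #{v | H.connectedComponentMk v = c}) (U : Finset V) :
    #{e ∈ H.edgeFinset | ∀ v ∈ e, v ∈ U} ≤ #U := by
  have hfibre : ∀ c : H.ConnectedComponent,
      #{e ∈ {e ∈ H.edgeFinset | ∀ v ∈ e, v ∈ U} | H.connectedComponentMk e.out.1 = c} =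
        #{e ∈ H.edgeFinset | (∀ v ∈ e, H.connectedComponentMk v = c) ∧ ∀ v ∈ e, v ∈ U} := by
    intro c
    rw [filter_filter]
    refine congrArg card (filter_congr fun e he => ?_)
    have hsame := fun v (hv : v ∈ e) =>
      connectedComponentMk_eq_of_mem_edgeSet (mem_edgeFinset.mp he) hv (Sym2.out_fst_mem e)
    exact ⟨fun ⟨hU, hc⟩ => ⟨fun v hv => (hsame v hv).trans hc, hU⟩,
      fun ⟨hc, hU⟩ => ⟨hU, hc _ (Sym2.out_fst_mem e)⟩⟩
  calc #{e ∈ H.edgeFinset | ∀ v ∈ e, v ∈ U}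
      = ∑ c, #{e ∈ H.edgeFinset | (∀ v ∈ e, H.connectedComponentMk v = c) ∧ ∀ v ∈ e, v ∈ U} := by
        rw [card_eq_sum_card_fiberwise (f := fun e => H.connectedComponentMk e.out.1) (t := univ)
          fun _ _ => mem_coe.mpr (mem_univ _)]
        exact sum_congr rfl fun c _ => hfibre c
    _ ≤ ∑ c, #{v ∈ U | H.connectedComponentMk v = c} :=
        sum_le_sum fun c _ => card_edges_subset_le_of_card_edges_le c (hH c) U
    _ = #U := (card_eq_sum_card_fiberwise fun _ _ => mem_coe.mpr (mem_univ _)).symm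

end SimpleGraph

theorem IsSingleCycleForest.card_edges_le {V : Type*} [Fintype V] [DecidableEq V]
    {H : SimpleGraph V} (hH : IsSingleCycleForest H) (c : H.ConnectedComponent) :
    #{e ∈ H.edgeFinset | ∀ v ∈ e, H.connectedComponentMk v = c} ≤
      #{v | H.connectedComponentMk v = c} := by
  convert hH c using 1 <;> rw [← Set.ncard_coe_finset] <;> congr 1 <;> ext <;> simp

section PairGraph

variable {V : Type*} [DecidableEq V] {F' : Finset (Finset V)}

theorem pairGraph_edgeFinset_map [Fintype V] (hF' : ∀ e ∈ F', #e = 2) :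
    (pairGraph F').edgeFinset.map ⟨Sym2.toFinset, Sym2.toFinset_injective⟩ = F' := by
  ext s
  simp only [mem_map, SimpleGraph.mem_edgeFinset, Function.Embedding.coeFn_mk]
  constructor
  · rintro ⟨e, he, rfl⟩
    induction e using Sym2.ind with
    | h u v => rw [Sym2.toFinset_mk_eq]; exact he.2
  · intro hs
    obtain ⟨u, v, huv, rfl⟩ := card_eq_two.mp (hF' s hs)
    exact ⟨s(u, v), ⟨huv, hs⟩, Sym2.toFinset_mk_eq⟩

theorem card_filter_subset_eq_card_pairGraph_edges [Fintype V] (hF' : ∀ e ∈ F', #e = 2)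
    (U : Finset V) :
    #{e ∈ F' | e ⊆ U} = #{e ∈ (pairGraph F').edgeFinset | ∀ v ∈ e, v ∈ U} := by
  conv_lhs => rw [← pairGraph_edgeFinset_map hF', filter_map, card_map]
  congr 1
  exact filter_congr fun e _ => by simp [Finset.subset_iff]

theorem sum_card_inter_sub_one_eq_card_filter_subset (hF' : ∀ e ∈ F', #e = 2) (U : Finset V) :
    ∑ e ∈ F' with (e ∩ U).Nonempty, (#(e ∩ U) - 1) = #{e ∈ F' | e ⊆ U} := by
  rw [sum_filter_of_ne fun e _ h => card_pos.mp (by omega), card_filter]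
  exact sum_congr rfl fun e he => card_inter_sub_one_eq_ite (hF' e he) U

end PairGraph

/-- If `F'` is a set of edges of a finite graph `G` whose edge-induced subgraph is a
single-cycle forest, then for every `U ⊆ V`,
`Σ_{e ∈ F', e ∩ U ≠ ∅} (|e ∩ U| − 1) ≤ |U|`. -/
theorem stmt5 {V : Type*} [Fintype V] [DecidableEq V] (G : SimpleGraph V)
    (F' : Finset (Finset V)) (hFE : ∀ e ∈ F', ∃ u v, G.Adj u v ∧ e = {u, v})
    (hSCF : IsSingleCycleForest (pairGraph F')) :
    ∀ U : Finset V,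
      ∑ e ∈ F'.filter (fun e => (e ∩ U).Nonempty), ((e ∩ U).card - 1) ≤ U.card := by
  intro U
  have hF' : ∀ e ∈ F', #e = 2 := fun e he => by
    obtain ⟨u, v, huv, rfl⟩ := hFE e he
    exact card_pair huv.ne
  rw [sum_card_inter_sub_one_eq_card_filter_subset hF',
    card_filter_subset_eq_card_pairGraph_edges hF']
  exact SimpleGraph.card_edges_subset_le hSCF.card_edges_le U
end

section
/- Let G = (V,F) be a finite hypergraph (F a collection of subsets of V, each of size at least 2), and let F' ⊆ F be such that the bipartite incidence graph of F' together with its incident vertices is a single-cycle forest. Then for every U ⊆ V, Σ_{α∈F' : α∩U ≠ ∅} (|α ∩ U| − 1) ≤ |U|. -/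
open scoped Classical

/-- The bipartite incidence graph of the hyperedges `A i`, `i ∈ S`, and their incident
vertices: `s ∈ V` is joined to `i ∈ S` whenever `s ∈ A i`. -/
def incidenceGraph {V ι : Type*} (A : ι → Finset V) (S : Finset ι) :
    SimpleGraph (V ⊕ ι) where
  Adj x y :=
    (∃ s i, x = Sum.inl s ∧ y = Sum.inr i ∧ i ∈ S ∧ s ∈ A i) ∨
    (∃ s i, y = Sum.inl s ∧ x = Sum.inr i ∧ i ∈ S ∧ s ∈ A i)
  symm := by
    constructor
    rintro x y (⟨s, i, h1, h2, h3, h4⟩ | ⟨s, i, h1, h2, h3, h4⟩)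
    · exact Or.inr ⟨s, i, h1, h2, h3, h4⟩
    · exact Or.inl ⟨s, i, h1, h2, h3, h4⟩
  loopless := by
    constructor
    rintro x (⟨s, i, h1, h2, -, -⟩ | ⟨s, i, h1, h2, -, -⟩) <;> subst h1 <;> simp_all

/-!
Every edge `s – α` with `s ∈ α ∩ U` of the incidence graph joins a vertex of `U` to a hyperedge
meeting `U`, and there are `∑ |α ∩ U|` of them. So it suffices that in a graph whose components
have at most as many edges as vertices, every vertex set `S` spans at most `|S|` edges. Split `S`
along the components; inside a component `D`, enlarge `S ∩ D` one adjacent vertex at a time until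
it is all of `D`: each added vertex brings at least one new edge, and `D` itself spans at most
`|D|` edges.
-/

open Finset

namespace SimpleGraph

lemma Reachable.exists_adj_boundary {W : Type*} {G : SimpleGraph W} {S : Set W} {t v : W}
    (h : G.Reachable t v) (ht : t ∈ S) (hv : v ∉ S) :
    ∃ t' ∈ S, ∃ u ∉ S, G.Adj t' u ∧ G.Reachable t u := by
  obtain ⟨p⟩ := h
  obtain ⟨d, hd, hfst, hsnd⟩ := p.exists_boundary_dart S ht hv
  exact ⟨d.fst, hfst, d.snd, hsnd, d.adj,
    ⟨p.takeUntil d.snd (p.dart_snd_mem_support_of_mem_darts hd)⟩⟩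

variable {W : Type*} [Fintype W] [DecidableEq W] (G : SimpleGraph W) [DecidableRel G.Adj]

def edgesWithin (S : Finset W) : Finset (Sym2 W) :=
  G.edgeFinset.filter fun e => ∀ v ∈ e, v ∈ S

variable {G}

@[simp]
lemma mem_edgesWithin {S : Finset W} {e : Sym2 W} :
    e ∈ G.edgesWithin S ↔ e ∈ G.edgeSet ∧ ∀ v ∈ e, v ∈ S := by
  simp [edgesWithin]

@[simp]
lemma edgesWithin_empty : G.edgesWithin ∅ = ∅ :=
  eq_empty_of_forall_notMem fun e he => by
    induction e using Sym2.ind with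
    | _ x y => simpa using (mem_edgesWithin.mp he).2 x (Sym2.mem_mk_left x y)

lemma card_edgesWithin_lt_insert {S : Finset W} {t u : W} (ht : t ∈ S) (hu : u ∉ S)
    (hadj : G.Adj t u) : #(G.edgesWithin S) < #(G.edgesWithin (insert u S)) := by
  refine card_lt_card (ssubset_iff_of_subset ?_ |>.mpr ⟨s(t, u), ?_, ?_⟩)
  · intro e
    simp only [mem_edgesWithin, mem_insert]
    exact fun ⟨he, hS⟩ => ⟨he, fun v hv => Or.inr (hS v hv)⟩
  · simp [hadj, ht]
  · simp [hu]

end SimpleGraph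

namespace IsSingleCycleForest

open SimpleGraph

variable {W : Type*} [Fintype W] [DecidableEq W] {G : SimpleGraph W} [DecidableRel G.Adj]

lemma card_edgesWithin_supp_le (hG : IsSingleCycleForest G) (c : G.ConnectedComponent) :
    #(G.edgesWithin {v | G.connectedComponentMk v = c}) ≤
      #{v | G.connectedComponentMk v = c} := by
  rw [← Set.ncard_coe_finset, ← Set.ncard_coe_finset]
  convert hG c using 2 <;> ext <;> simp

lemma card_edgesWithin_le_of_forall_mem_supp (hG : IsSingleCycleForest G)
    {c : G.ConnectedComponent} {T : Finset W} (hT : ∀ v ∈ T, G.connectedComponentMk v = c) :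
    #(G.edgesWithin T) ≤ #T := by
  set D : Finset W := {v | G.connectedComponentMk v = c}
  obtain ⟨k, hk⟩ : ∃ k, #(D \ T) = k := ⟨_, rfl⟩
  induction k generalizing T with
  | zero =>
    have hTD : T = D := Subset.antisymm (fun v hv => by simpa [D] using hT v hv)
      (sdiff_eq_empty_iff_subset.mp (card_eq_zero.mp hk))
    exact hTD ▸ hG.card_edgesWithin_supp_le c
  | succ k ih =>
    obtain rfl | ⟨t, ht⟩ := T.eq_empty_or_nonempty
    · simp
    obtain ⟨v, hv⟩ : (D \ T).Nonempty := card_pos.mp (by omega)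
    have hv' : G.connectedComponentMk v = c ∧ v ∉ T := by simpa [D] using hv
    obtain ⟨t', ht', u, hu, hadj, htu⟩ :=
      (ConnectedComponent.exact ((hT t ht).trans hv'.1.symm)).exists_adj_boundary (S := T) ht hv'.2
    rw [mem_coe] at ht' hu
    have huc : G.connectedComponentMk u = c :=
      (ConnectedComponent.sound htu).symm.trans (hT t ht)
    have hk' : #(D \ insert u T) = k := by
      rw [sdiff_insert, card_erase_of_mem (by simp [D, huc, hu]), hk, Nat.add_sub_cancel]
    refine Nat.lt_succ_iff.mp ?_
    calc #(G.edgesWithin T) < #(G.edgesWithin (insert u T)) :=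
          card_edgesWithin_lt_insert ht' hu hadj
      _ ≤ #(insert u T) := ih (by simpa [huc] using hT) hk'
      _ = #T + 1 := card_insert_of_notMem hu

theorem card_edgesWithin_le (hG : IsSingleCycleForest G) (S : Finset W) :
    #(G.edgesWithin S) ≤ #S := by
  let P (c : G.ConnectedComponent) : Finset W := {v ∈ S | G.connectedComponentMk v = c}
  have hcover : G.edgesWithin S ⊆
      (S.image G.connectedComponentMk).biUnion fun c => G.edgesWithin (P c) := by
    intro e he
    induction e using Sym2.ind with
    | _ x y =>
      obtain ⟨hxy, hS⟩ := mem_edgesWithin.mp he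
      have hxS := hS x (Sym2.mem_mk_left x y)
      refine mem_biUnion.mpr ⟨_, mem_image_of_mem _ hxS, mem_edgesWithin.mpr ⟨hxy, ?_⟩⟩
      intro v hv
      rcases Sym2.mem_iff.mp hv with rfl | rfl
      · exact mem_filter.mpr ⟨hxS, rfl⟩
      · exact mem_filter.mpr
          ⟨hS v hv, (ConnectedComponent.connectedComponentMk_eq_of_adj hxy).symm⟩
  calc #(G.edgesWithin S)
      ≤ #((S.image G.connectedComponentMk).biUnion fun c => G.edgesWithin (P c)) :=
        card_le_card hcover
    _ ≤ ∑ c ∈ S.image G.connectedComponentMk, #(G.edgesWithin (P c)) := card_biUnion_le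
    _ ≤ ∑ c ∈ S.image G.connectedComponentMk, #(P c) :=
        sum_le_sum fun c _ =>
          hG.card_edgesWithin_le_of_forall_mem_supp fun v hv => (mem_filter.mp hv).2
    _ = #S := (card_eq_sum_card_image _ _).symm

end IsSingleCycleForest

lemma Finset.sum_card_sub_one_add_card_filter_nonempty {ι V : Type*} (B : ι → Finset V)
    (S : Finset ι) :
    ∑ i ∈ S with (B i).Nonempty, (#(B i) - 1) + #{i ∈ S | (B i).Nonempty} =
      ∑ i ∈ S, #(B i) := by
  rw [card_eq_sum_ones, ← sum_add_distrib,
    ← sum_filter_of_ne fun i _ h => card_pos.mp (Nat.pos_of_ne_zero h)]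
  exact sum_congr rfl fun i hi => Nat.sub_add_cancel (card_pos.mpr (mem_filter.mp hi).2)

lemma sum_card_inter_le_card_edgesWithin_incidenceGraph {V ι : Type*} [Fintype V]
    [DecidableEq V] [Fintype ι] (A : ι → Finset V) (S : Finset ι) (U : Finset V) :
    ∑ i ∈ S, #(A i ∩ U) ≤ #((incidenceGraph A S).edgesWithin
      (U.image Sum.inl ∪ {i ∈ S | (A i ∩ U).Nonempty}.image Sum.inr)) := by
  rw [← card_sigma]
  refine card_le_card_of_injOn (fun p => s(Sum.inl p.2, Sum.inr p.1)) ?_ ?_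
  · rintro ⟨i, s⟩ hp
    obtain ⟨hi, hs⟩ := mem_sigma.mp hp
    obtain ⟨hsA, hsU⟩ := mem_inter.mp hs
    refine SimpleGraph.mem_edgesWithin.mpr ⟨Or.inl ⟨s, i, rfl, rfl, hi, hsA⟩, fun v hv => ?_⟩
    rcases Sym2.mem_iff.mp hv with rfl | rfl
    · simp [hsU]
    · simpa using ⟨hi, s, hs⟩
  · rintro ⟨i, s⟩ - ⟨i', s'⟩ - h
    obtain ⟨rfl, rfl⟩ : s = s' ∧ i = i' := by simpa [Sym2.eq_iff] using h
    rfl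

theorem stmt6_general {V ι : Type*} [Fintype V] [DecidableEq V] [Fintype ι]
    (A : ι → Finset V) (F' : Finset ι)
    (hSCF : IsSingleCycleForest (incidenceGraph A F')) :
    ∀ U : Finset V,
      ∑ i ∈ F'.filter (fun i => (A i ∩ U).Nonempty), ((A i ∩ U).card - 1) ≤ U.card := by
  intro U
  have hedges := sum_card_inter_le_card_edgesWithin_incidenceGraph A F' U
  have hforest := hSCF.card_edgesWithin_le
    (U.image Sum.inl ∪ (F'.filter fun i => (A i ∩ U).Nonempty).image Sum.inr)
  have hsupport : #(U.image Sum.inl ∪ (F'.filter fun i => (A i ∩ U).Nonempty).image Sum.inr) ≤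
      #U + #(F'.filter fun i => (A i ∩ U).Nonempty) :=
    (card_union_le _ _).trans (add_le_add card_image_le card_image_le)
  have hsum := sum_card_sub_one_add_card_filter_nonempty (fun i => A i ∩ U) F'
  omega

/-- Kikuchi/Bethe polytope containment at vertices: if `F' ⊆ F` is a set of hyperedges whose
incidence graph (together with its incident vertices) is a single-cycle forest, then for
every `U ⊆ V` one has `Σ_{α ∈ F', α ∩ U ≠ ∅} (|α ∩ U| − 1) ≤ |U|`. -/
theorem stmt6 {V ι : Type*} [Fintype V] [DecidableEq V] [Fintype ι]
    (A : ι → Finset V) (F F' : Finset ι)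
    (hcard : ∀ i ∈ F, 2 ≤ (A i).card) (hsub : F' ⊆ F)
    (hSCF : IsSingleCycleForest (incidenceGraph A F')) :
    ∀ U : Finset V,
      ∑ i ∈ F'.filter (fun i => (A i ∩ U).Nonempty), ((A i ∩ U).card - 1) ≤ U.card :=
  stmt6_general A F' hSCF
end

section
/- The polytope ℂ = {x ∈ [0,1]^E : Σ_{e ∈ E(U)} x_e ≤ |U| for all U ⊆ V} of a finite graph G = (V,E) is integral: for every c ∈ ℝ^E, the maximum of Σ_e c_e x_e over ℂ is attained at a 0/1 vector (which is the indicator of a single-cycle forest). -/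
open scoped Classical

/-- Membership in the polytope `ℂ = {x ∈ [0,1]^E : Σ_{e ∈ E(U)} x_e ≤ |U| for all U ⊆ V}`. -/
def inPolytope {V : Type*} [DecidableEq V] (E : Finset (Finset V))
    (x : Finset V → ℝ) : Prop :=
  (∀ e ∈ E, 0 ≤ x e ∧ x e ≤ 1) ∧
    ∀ U : Finset V, ∑ e ∈ E.filter (fun e => e ⊆ U), x e ≤ (U.card : ℝ)

/-! A family `B` of edges is sparse if every vertex set `U` spans at most `|U|` edges of `B`;
these are the independent sets of the bicircular matroid, and `ℂ` is its independence polytope.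
If `B` is a maximal sparse subfamily of `A`, the union `T` of all tight sets (those spanning
exactly `|U|` edges of `B`) is tight, because tightness is preserved under union by
submodularity, and every edge of `A \ B` lies inside `T`; hence every `x ∈ ℂ` satisfies
`x(A) ≤ x(A(T)) + |A \ A(T)| ≤ |T| + |B \ B(T)| = |B|`. Running the greedy algorithm on the
edges of positive weight in decreasing order, each prefix of the order gets a maximal sparse
subfamily, and peeling off the smallest weight turns these rank bounds into optimality of the
greedy solution. Finally, a sparse family has at most as many edges in each connected component
as the component has vertices, so it is a single-cycle forest. -/

open Finset

section

variable {V : Type*} [DecidableEq V]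

def IsSparse (B : Finset (Finset V)) : Prop :=
  ∀ U : Finset V, #{e ∈ B | e ⊆ U} ≤ #U

def IsTight (B : Finset (Finset V)) (U : Finset V) : Prop :=
  #{e ∈ B | e ⊆ U} = #U

theorem IsSparse.mono {B B' : Finset (Finset V)} (hB : IsSparse B) (h : B' ⊆ B) :
    IsSparse B' :=
  fun U => (card_le_card (filter_subset_filter _ h)).trans (hB U)

theorem IsSparse.isTight_empty {B : Finset (Finset V)} (hB : IsSparse B) : IsTight B ∅ :=
  le_antisymm (hB ∅) (by simp)

theorem IsSparse.isTight_union {B : Finset (Finset V)} (hB : IsSparse B) {U W : Finset V}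
    (hU : IsTight B U) (hW : IsTight B W) : IsTight B (U ∪ W) := by
  have hsup : {e ∈ B | e ⊆ U} ∪ {e ∈ B | e ⊆ W} ⊆ {e ∈ B | e ⊆ U ∪ W} := by
    intro e
    simp only [mem_union, mem_filter]
    rintro (⟨heB, he⟩ | ⟨heB, he⟩)
    exacts [⟨heB, he.trans subset_union_left⟩, ⟨heB, he.trans subset_union_right⟩]
  have hinf : {e ∈ B | e ⊆ U} ∩ {e ∈ B | e ⊆ W} = {e ∈ B | e ⊆ U ∩ W} := by
    simp only [← filter_and, subset_inter_iff]
  have hB' := card_union_add_card_inter {e ∈ B | e ⊆ U} {e ∈ B | e ⊆ W}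
  have hUW := card_union_add_card_inter U W
  rw [hinf] at hB'
  unfold IsTight at hU hW ⊢
  have := card_le_card hsup
  have := hB (U ∪ W)
  have := hB (U ∩ W)
  omega

theorem IsSparse.exists_isTight_of_not_isSparse_insert {B : Finset (Finset V)}
    (hB : IsSparse B) {e : Finset V} (he : ¬ IsSparse (insert e B)) : ∃ U, e ⊆ U ∧ IsTight B U := by
  simp only [IsSparse, not_forall, not_le] at he
  obtain ⟨U, hU⟩ := he
  by_cases heU : e ⊆ U
  · rw [filter_insert, if_pos heU] at hU
    exact ⟨U, heU, le_antisymm (hB U) (Nat.lt_succ_iff.1 (hU.trans_le (card_insert_le _ _)))⟩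
  · rw [filter_insert, if_neg heU] at hU
    exact absurd (hB U) hU.not_ge

theorem inPolytope.mono {A E : Finset (Finset V)} {x : Finset V → ℝ} (hx : inPolytope E x)
    (hAE : A ⊆ E) : inPolytope A x :=
  ⟨fun e he => hx.1 e (hAE he), fun U => (sum_le_sum_of_subset_of_nonneg
    (filter_subset_filter _ hAE) fun e he _ => (hx.1 e (mem_filter.1 he).1).1).trans (hx.2 U)⟩

theorem sum_le_card_of_forall_not_isSparse_insert {A B : Finset (Finset V)}
    {x : Finset V → ℝ} (hB : IsSparse B) (hmax : ∀ e ∈ A, e ∉ B → ¬ IsSparse (insert e B))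
    (hx : inPolytope A x) : ∑ e ∈ A, x e ≤ #B := by
  have hspan : ∀ e ∈ A \ B, ∃ U, e ⊆ U ∧ IsTight B U := fun e he =>
    hB.exists_isTight_of_not_isSparse_insert (hmax e (mem_sdiff.1 he).1 (mem_sdiff.1 he).2)
  choose! U hU using hspan
  set T := (A \ B).sup U
  have hT : IsTight B T :=
    sup_induction hB.isTight_empty (fun _ h _ h' => hB.isTight_union h h')
      fun e he => (hU e he).2
  have houter : {e ∈ A | ¬ e ⊆ T} ⊆ {e ∈ B | ¬ e ⊆ T} := by
    intro e he
    rw [mem_filter] at he ⊢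
    refine ⟨by_contra fun heB => he.2 ?_, he.2⟩
    have he' : e ∈ A \ B := mem_sdiff.2 ⟨he.1, heB⟩
    exact (hU e he').1.trans (le_sup (f := U) he')
  calc ∑ e ∈ A, x e = ∑ e ∈ A with e ⊆ T, x e + ∑ e ∈ A with ¬ e ⊆ T, x e :=
        (sum_filter_add_sum_filter_not _ _ _).symm
    _ ≤ #T + #{e ∈ A | ¬ e ⊆ T} := by
        gcongr
        · exact hx.2 T
        · exact (sum_le_sum fun e he => (hx.1 e (mem_filter.1 he).1).2).trans (by simp)
    _ ≤ #{e ∈ B | e ⊆ T} + #{e ∈ B | ¬ e ⊆ T} := by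
        rw [hT]
        gcongr
    _ = #B := by exact_mod_cast card_filter_add_card_filter_not _

theorem inPolytope_indicator {E B : Finset (Finset V)} (hBE : B ⊆ E) (hB : IsSparse B) :
    inPolytope E (fun e => if e ∈ B then 1 else 0) := by
  refine ⟨fun e _ => by beta_reduce; split_ifs <;> norm_num, fun U => ?_⟩
  rw [sum_boole, filter_filter]
  have : {e ∈ E | e ⊆ U ∧ e ∈ B} = {e ∈ B | e ⊆ U} := by
    ext e
    simp only [mem_filter]
    exact ⟨fun h => ⟨h.2.2, h.2.1⟩, fun h => ⟨hBE h.1, h.2, h.1⟩⟩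
  exact_mod_cast this ▸ hB U

theorem IsSparse.isSingleCycleForest_pairGraph [Fintype V] {F : Finset (Finset V)}
    (hF : IsSparse F) : IsSingleCycleForest (pairGraph F) := by
  intro C
  let U : Finset V := {v | (pairGraph F).connectedComponentMk v = C}
  have hinj : Set.InjOn Sym2.toFinset {e ∈ (pairGraph F).edgeSet |
      ∀ v ∈ e, (pairGraph F).connectedComponentMk v = C} := fun z _ z' _ h =>
    Sym2.ext fun v => by rw [← Sym2.mem_toFinset, h, Sym2.mem_toFinset]
  calc _ ≤ (({e ∈ F | e ⊆ U} : Finset _) : Set (Finset V)).ncard := by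
        refine Set.ncard_le_ncard_of_injOn _ ?_ hinj
        rintro z ⟨hz, hC⟩
        induction z using Sym2.ind with
        | _ a b =>
          simp only [Sym2.toFinset_mk_eq, coe_filter, Set.mem_ofPred_eq, insert_subset_iff,
            singleton_subset_iff, U, mem_filter, mem_univ, true_and]
          exact ⟨hz.2, hC a (Sym2.mem_mk_left a b), hC b (Sym2.mem_mk_right a b)⟩
    _ ≤ #U := by rw [Set.ncard_coe_finset]; exact hF U
    _ = _ := by rw [← Set.ncard_coe_finset]; simp [U]

noncomputable def greedyStep (B : Finset (Finset V)) (e : Finset V) : Finset (Finset V) :=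
  if IsSparse (insert e B) then insert e B else B

noncomputable def greedy (l : List (Finset V)) : Finset (Finset V) :=
  l.foldl greedyStep ∅

theorem greedy_append_singleton (l : List (Finset V)) (e : Finset V) :
    greedy (l ++ [e]) = greedyStep (greedy l) e := by
  simp [greedy, List.foldl_append]

theorem isSparse_greedy (l : List (Finset V)) : IsSparse (greedy l) := by
  induction l using List.reverseRecOn with
  | nil => exact fun U => by simp [greedy]
  | append_singleton l e ih =>
    rw [greedy_append_singleton, greedyStep]
    split_ifs with h
    exacts [h, ih]

theorem greedy_subset (l : List (Finset V)) : greedy l ⊆ l.toFinset := by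
  induction l using List.reverseRecOn with
  | nil => simp [greedy]
  | append_singleton l e ih =>
    rw [greedy_append_singleton, greedyStep, List.toFinset_append, union_comm]
    split_ifs
    exacts [insert_subset_insert _ ih, ih.trans (subset_insert _ _)]

theorem greedy_subset_greedy_append_singleton (l : List (Finset V)) (e : Finset V) :
    greedy l ⊆ greedy (l ++ [e]) := by
  rw [greedy_append_singleton, greedyStep]
  split_ifs
  exacts [subset_insert _ _, subset_rfl]

theorem not_isSparse_insert_greedy (l : List (Finset V)) :
    ∀ e ∈ l, e ∉ greedy l → ¬ IsSparse (insert e (greedy l)) := by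
  induction l using List.reverseRecOn with
  | nil => simp
  | append_singleton l a ih =>
    intro e he heG hsp
    have hsub := greedy_subset_greedy_append_singleton l a
    rcases List.mem_append.1 he with he | he
    · exact ih e he (fun h => heG (hsub h)) (hsp.mono (insert_subset_insert _ hsub))
    · rw [List.mem_singleton.1 he] at heG hsp
      have h : IsSparse (insert a (greedy l)) := hsp.mono (insert_subset_insert _ hsub)
      rw [greedy_append_singleton, greedyStep, if_pos h] at heG
      exact heG (mem_insert_self _ _)

theorem sum_greedyStep_of_eq_zero {M : Type*} [AddCommMonoid M] {f : Finset V → M}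
    (B : Finset (Finset V)) {e : Finset V} (he : f e = 0) :
    ∑ b ∈ greedyStep B e, f b = ∑ b ∈ B, f b := by
  unfold greedyStep
  split_ifs
  exacts [sum_insert_of_eq_zero_if_notMem fun _ => he, rfl]

theorem sum_mul_le_sum_greedy {l : List (Finset V)} {c x : Finset V → ℝ}
    (hc : l.Pairwise fun a b => c b ≤ c a) (hc0 : ∀ e ∈ l, 0 ≤ c e)
    (hx : inPolytope l.toFinset x) :
    ∑ e ∈ l.toFinset, c e * x e ≤ ∑ e ∈ greedy l, c e := by
  induction l using List.reverseRecOn generalizing c with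
  | nil => simp [greedy]
  | append_singleton l a ih =>
    rw [List.pairwise_append] at hc
    have hL : (l ++ [a]).toFinset = insert a l.toFinset := by
      rw [List.toFinset_append, union_comm]
      rfl
    have hca : 0 ≤ c a := hc0 a (by simp)
    -- Peel off the smallest weight `c a`: the rest `c - c a` is still nonnegative and sorted.
    have hrest : ∑ e ∈ l.toFinset, (c e - c a) * x e ≤ ∑ e ∈ greedy l, (c e - c a) :=
      ih (hc.1.imp fun h => sub_le_sub_right h _)
        (fun e he => sub_nonneg.2 (hc.2.2 e he a (List.mem_singleton_self a)))
        (hx.mono (by simp))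
    have hrank : ∑ e ∈ (l ++ [a]).toFinset, x e ≤ #(greedy (l ++ [a])) :=
      sum_le_card_of_forall_not_isSparse_insert (isSparse_greedy _)
        (fun e he => not_isSparse_insert_greedy _ e (List.mem_toFinset.1 he)) hx
    rw [hL] at hrank ⊢
    calc ∑ e ∈ insert a l.toFinset, c e * x e
        = ∑ e ∈ insert a l.toFinset, (c e - c a) * x e
            + c a * ∑ e ∈ insert a l.toFinset, x e := by
          rw [mul_sum, ← sum_add_distrib]
          exact sum_congr rfl fun _ _ => by ring
      _ = ∑ e ∈ l.toFinset, (c e - c a) * x e + c a * ∑ e ∈ insert a l.toFinset, x e := by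
          rw [sum_insert_of_eq_zero_if_notMem fun _ => by ring]
      _ ≤ ∑ e ∈ greedy l, (c e - c a) + c a * #(greedy (l ++ [a])) :=
          add_le_add hrest (mul_le_mul_of_nonneg_left hrank hca)
      _ = ∑ e ∈ greedy (l ++ [a]), (c e - c a) + c a * #(greedy (l ++ [a])) := by
          rw [greedy_append_singleton, sum_greedyStep_of_eq_zero _ (sub_self _)]
      _ = ∑ e ∈ greedy (l ++ [a]), c e := by
          rw [sum_sub_distrib, sum_const, nsmul_eq_mul]
          ring

end

theorem exists_toFinset_eq_pairwise {α β : Type*} [DecidableEq α] [LinearOrder β]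
    (s : Finset α) (c : α → β) :
    ∃ l : List α, l.toFinset = s ∧ l.Pairwise fun a b => c b ≤ c a := by
  refine ⟨s.toList.mergeSort fun a b => decide (c b ≤ c a), ?_, ?_⟩
  · rw [List.toFinset_eq_of_perm _ _ (List.mergeSort_perm _ _), toList_toFinset]
  · simpa using List.pairwise_mergeSort (le := fun a b => decide (c b ≤ c a))
      (fun a b d h h' => by simp only [decide_eq_true_eq] at *; exact h'.trans h)
      (fun a b => by simpa using le_total _ _) s.toList

theorem stmt8_general {V : Type*} [Fintype V] [DecidableEq V] (E : Finset (Finset V))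
    (c : Finset V → ℝ) :
    ∃ xstar : Finset V → ℝ, inPolytope E xstar ∧
      (∀ e ∈ E, xstar e = 0 ∨ xstar e = 1) ∧
      IsSingleCycleForest (pairGraph (E.filter (fun e => xstar e = 1))) ∧
      ∀ x : Finset V → ℝ, inPolytope E x →
        ∑ e ∈ E, c e * x e ≤ ∑ e ∈ E, c e * xstar e := by
  obtain ⟨l, hl, hc⟩ := exists_toFinset_eq_pairwise {e ∈ E | 0 < c e} c
  set B := greedy l
  have hBE : B ⊆ E := (greedy_subset l).trans (hl ▸ filter_subset _ _)
  refine ⟨fun e => if e ∈ B then 1 else 0, inPolytope_indicator hBE (isSparse_greedy l),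
    fun e _ => by beta_reduce; split_ifs <;> simp, ?_, fun x hx => ?_⟩
  · have hB : {e ∈ E | (if e ∈ B then (1 : ℝ) else 0) = 1} = B := by
      ext e
      by_cases he : e ∈ B
      · simp [he, hBE he]
      · simp [he]
    rw [hB]
    exact (isSparse_greedy l).isSingleCycleForest_pairGraph
  have hpos : ∑ e ∈ E, c e * x e ≤ ∑ e ∈ E with 0 < c e, c e * x e := by
    rw [← sum_filter_add_sum_filter_not E (0 < c ·)]
    refine add_le_of_nonpos_right (sum_nonpos fun e he => ?_)
    rw [mem_filter] at he
    exact mul_nonpos_of_nonpos_of_nonneg (not_lt.1 he.2) (hx.1 e he.1).1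
  have hgreedy := sum_mul_le_sum_greedy hc
    (fun e he => (mem_filter.1 (hl ▸ List.mem_toFinset.2 he)).2.le)
    (hl ▸ hx.mono (filter_subset _ _))
  rw [hl] at hgreedy
  calc ∑ e ∈ E, c e * x e ≤ ∑ e ∈ B, c e := hpos.trans hgreedy
    _ = ∑ e ∈ E, c e * if e ∈ B then 1 else 0 := by
      simp only [mul_ite, mul_one, mul_zero, sum_ite_mem, inter_eq_right.2 hBE]

/-- Integrality of the polytope `ℂ`: for every objective `c`, the maximum of `Σ_e c_e x_e`
over `ℂ` is attained at a `0/1` vector which is the indicator of a single-cycle forest. -/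
theorem stmt8 {V : Type*} [Fintype V] [DecidableEq V] (E : Finset (Finset V))
    (hE : ∀ e ∈ E, e.card = 2) (c : Finset V → ℝ) :
    ∃ xstar : Finset V → ℝ, inPolytope E xstar ∧
      (∀ e ∈ E, xstar e = 0 ∨ xstar e = 1) ∧
      IsSingleCycleForest (pairGraph (E.filter (fun e => xstar e = 1))) ∧
      ∀ x : Finset V → ℝ, inPolytope E x →
        ∑ e ∈ E, c e * x e ≤ ∑ e ∈ E, c e * xstar e :=
  stmt8_general E c
end

section
/- Consider the two-layer region graph with vertices V = {1,2,3,4,5} and factors α₁ = {1,2,3}, α₂ = {2,3,4}, α₃ = {3,4,5}. The point ρ = (1, 1/2, 1) satisfies Σ_{αᵢ : αᵢ∩U ≠ ∅} (|αᵢ ∩ U| − 1) ρᵢ ≤ |U| for all U ⊆ V, but ρ is not in the convex hull of {1_{F'} : F' ⊆ {α₁,α₂,α₃}, the incidence graph of F' with its incident vertices is a single-cycle forest}. -/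
open scoped Classical

/-- The factors of the example: `α₁ = {1,2,3}`, `α₂ = {2,3,4}`, `α₃ = {3,4,5}` (as subsets
of `{1,…,5}`, here indexed by `Fin 5`). -/
def exFactors : Fin 3 → Finset (Fin 5) := ![{0, 1, 2}, {1, 2, 3}, {2, 3, 4}]

/-!
The concavity inequalities for `ρ = (1, 1/2, 1)` are a finite check over the 32 subsets `U`.
For the other half, the incidence graph of all three factors is connected (vertex `3` lies in
every factor) and has 9 edges on 8 vertices, so it contains two cycles. Hence every admissible
indicator vector has at most two nonzero entries, the convex hull lies in the half-space
`ρ₁ + ρ₂ + ρ₃ ≤ 2`, and `ρ` has coordinate sum `5/2`.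
-/

lemma IsSingleCycleForest.ncard_edgeSet_le {W : Type*} {G : SimpleGraph W}
    (hG : IsSingleCycleForest G) (hconn : G.Preconnected) : G.edgeSet.ncard ≤ Nat.card W := by
  rcases isEmpty_or_nonempty W with _ | ⟨⟨v⟩⟩
  · simp [Set.eq_empty_of_isEmpty G.edgeSet]
  have hall (w : W) : G.connectedComponentMk w = G.connectedComponentMk v :=
    SimpleGraph.ConnectedComponent.sound (hconn w v)
  simpa [hall] using hG (G.connectedComponentMk v)

lemma incidenceGraph_preconnected {V ι : Type*} [Fintype ι] (A : ι → Finset V) {v : V}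
    (hv : ∀ i, v ∈ A i) (hcover : ∀ s, ∃ i, s ∈ A i) :
    (incidenceGraph A Finset.univ).Preconnected := by
  have adj {s : V} {i : ι} (h : s ∈ A i) :
      (incidenceGraph A Finset.univ).Adj (Sum.inl s) (Sum.inr i) :=
    Or.inl ⟨s, i, rfl, rfl, Finset.mem_univ i, h⟩
  have reach_hub : ∀ w, (incidenceGraph A Finset.univ).Reachable w (Sum.inl v)
    | Sum.inr i => (adj (hv i)).symm.reachable
    | Sum.inl s =>
      have ⟨i, hi⟩ := hcover s
      (adj hi).reachable.trans (adj (hv i)).symm.reachable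
  exact fun w w' => (reach_hub w).trans (reach_hub w').symm

lemma sum_card_le_ncard_edgeSet_incidenceGraph {V ι : Type*} [Finite V] [Finite ι]
    (A : ι → Finset V) (S : Finset ι) :
    ∑ i ∈ S, (A i).card ≤ (incidenceGraph A S).edgeSet.ncard := by
  rw [← Finset.card_sigma, ← Set.ncard_coe_finset]
  refine Set.ncard_le_ncard_of_injOn (fun p => s(Sum.inl p.2, Sum.inr p.1)) ?_ ?_
  · rintro ⟨i, s⟩ h
    simp only [Finset.coe_sigma, Set.mem_sigma_iff, Finset.mem_coe] at h
    exact Or.inl ⟨s, i, rfl, rfl, h⟩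
  · rintro ⟨i, s⟩ - ⟨j, t⟩ - h
    simp only [Sym2.eq, Sym2.rel_iff', Prod.mk.injEq, Sum.inl.injEq, Sum.inr.injEq,
      Prod.swap_prod_mk, reduceCtorEq, and_self, or_false] at h
    obtain ⟨rfl, rfl⟩ := h
    rfl

lemma not_isSingleCycleForest_incidenceGraph {V ι : Type*} [Finite V] [Fintype ι]
    (A : ι → Finset V) {v : V} (hv : ∀ i, v ∈ A i) (hcover : ∀ s, ∃ i, s ∈ A i)
    (hcard : Nat.card (V ⊕ ι) < ∑ i, (A i).card) :
    ¬ IsSingleCycleForest (incidenceGraph A Finset.univ) := fun h =>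
  hcard.not_ge <| (sum_card_le_ncard_edgeSet_incidenceGraph A _).trans <|
    h.ncard_edgeSet_le (incidenceGraph_preconnected A hv hcover)

lemma sum_le_of_mem_convexHull_indicators {ι : Type*} [Fintype ι] [DecidableEq ι]
    {P : Finset ι → Prop} (hP : ¬ P Finset.univ) {x : ι → ℝ}
    (hx : x ∈ convexHull ℝ {x : ι → ℝ | ∃ S, P S ∧ x = fun i => if i ∈ S then (1 : ℝ) else 0}) :
    ∑ i, x i ≤ Fintype.card ι - 1 := by
  have hlin : IsLinearMap ℝ fun x : ι → ℝ => ∑ i, x i :=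
    ⟨fun x y => Finset.sum_add_distrib, fun c x => by simp [Finset.mul_sum]⟩
  refine convexHull_min ?_ (convex_halfSpace_le hlin _) hx
  rintro _ ⟨S, hS, rfl⟩
  have hlt : S.card < Fintype.card ι :=
    (Finset.card_lt_iff_ne_univ S).2 fun h => hP (h ▸ hS)
  have : (S.card : ℝ) ≤ Fintype.card ι - 1 := by
    rw [le_sub_iff_add_le]; exact_mod_cast hlt
  simpa using this

lemma exFactors_not_isSingleCycleForest :
    ¬ IsSingleCycleForest (incidenceGraph exFactors Finset.univ) :=
  not_isSingleCycleForest_incidenceGraph exFactors (v := 2) (by decide) (by decide)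
    (by rw [Nat.card_eq_fintype_card]; decide)

lemma exFactors_concavity (U : Finset (Fin 5)) :
    ∑ i ∈ Finset.univ.filter (fun i => (exFactors i ∩ U).Nonempty),
        (((exFactors i ∩ U).card : ℝ) - 1) * (![1, 1/2, 1] : Fin 3 → ℝ) i ≤ (U.card : ℝ) := by
  rw [Finset.sum_filter, Fin.sum_univ_three]
  fin_cases U <;> simp [exFactors] <;> norm_num

/-- For the two-layer region graph with `V = {1,…,5}` and factors `{1,2,3}, {2,3,4}, {3,4,5}`,
the point `ρ = (1, 1/2, 1)` lies in the polytope of concavity `ℂ` but not in the convex hull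
of indicator vectors of single-cycle-forest factor subsets. -/
theorem stmt11 :
    (∀ U : Finset (Fin 5),
        ∑ i ∈ Finset.univ.filter (fun i => (exFactors i ∩ U).Nonempty),
            (((exFactors i ∩ U).card : ℝ) - 1) * (![1, 1/2, 1] : Fin 3 → ℝ) i
          ≤ (U.card : ℝ)) ∧
    (![1, 1/2, 1] : Fin 3 → ℝ) ∉
      convexHull ℝ
        {x : Fin 3 → ℝ | ∃ S : Finset (Fin 3),
          IsSingleCycleForest (incidenceGraph exFactors S) ∧
          x = fun i => if i ∈ S then (1 : ℝ) else 0} := by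
  refine ⟨exFactors_concavity, fun hmem => ?_⟩
  have hsum := sum_le_of_mem_convexHull_indicators (hx := hmem)
    exFactors_not_isSingleCycleForest
  norm_num [Fin.sum_univ_three, Matrix.cons_val_two] at hsum
end

section
/- Let R be a finite poset (of regions) and ρ : R → ℝ a weight function such that Σ_{s ∈ F(S)} ρ_s ≥ 0 for all S ⊆ R, where F(S) = {t ∈ R : ∃ s ∈ S, s ≤ t}. Then, in the bipartite graph whose parts are V₁ = {r : ρ_r < 0} and V₂ = {r : ρ_r > 0}, with edges (s,t) whenever s < t, there exists a nonnegative edge labeling γ with Σ_{t : s<t, ρ_t>0} γ(s,t) = −ρ_s for all s ∈ V₁ and Σ_{s : s<t, ρ_s<0} γ(s,t) ≤ ρ_t for all t ∈ V₂. -/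
open scoped Classical
open Finset Filter Topology

/-!
Put the demand `ρ⁻` on the rows and the capacity `ρ⁺` on the columns, and join `s` to `t`
when `s < t` and `ρ s < 0 < ρ t`. For `S` with negative part `S'`, the forebear condition on
`S'` gives Hall's condition `Σ_S ρ⁻ ≤ Σ_{F(S')} ρ⁻ ≤ Σ_{F(S')} ρ⁺ ≤ Σ_{N(S)} ρ⁺`, because every
positive forebear of `S'` lies strictly above a negative element of `S`.

The weighted Hall theorem is proved by a max-flow argument. By compactness there is a fractional
matching of maximal total mass. If a row `a₀` were unsaturated, every column adjacent to a row
reachable from `a₀` by an alternating path would be saturated, as otherwise pushing mass along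
the path increases the total. The set `X` of reachable rows then violates Hall's condition: the
saturated columns `N(X)` receive mass only from `X`.
-/

lemma eventually_nhdsGT_zero_add_mul_le {u v c : ℝ} (hu : u ≤ c) (h : v ≤ 0 ∨ u < c) :
    ∀ᶠ t in 𝓝[>] 0, u + t * v ≤ c := by
  rcases h with hv | hlt
  · filter_upwards [self_mem_nhdsWithin] with t (ht : 0 < t)
    nlinarith
  · have : Tendsto (fun t : ℝ => u + t * v) (𝓝 0) (𝓝 u) :=
      Continuous.tendsto' (by fun_prop) 0 u (by simp)
    exact ((this.mono_left nhdsWithin_le_nhds).eventually (gt_mem_nhds hlt)).mono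
      fun _ => le_of_lt

namespace WeightedHall

variable {ι α : Type*}

noncomputable def unitEdge (a₁ : ι) (x₁ : α) : ι → α → ℝ :=
  fun a x => if a = a₁ ∧ x = x₁ then 1 else 0

lemma sum_unitEdge_row [Fintype α] (a₁ : ι) (x₁ : α) (a : ι) :
    ∑ x, unitEdge a₁ x₁ a x = if a = a₁ then 1 else 0 := by
  by_cases h : a = a₁ <;> simp [unitEdge, h]

lemma sum_unitEdge_col [Fintype ι] (a₁ : ι) (x₁ : α) (x : α) :
    ∑ a, unitEdge a₁ x₁ a x = if x = x₁ then 1 else 0 := by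
  by_cases h : x = x₁ <;> simp [unitEdge, h]

def alternatingStep (E : ι → α → Prop) (γ : ι → α → ℝ) (a a' : ι) : Prop :=
  ∃ x, E a x ∧ 0 < γ a' x

noncomputable def neighbors [Fintype α] (E : ι → α → Prop) (S : Finset ι) : Finset α :=
  univ.filter fun x => ∃ a ∈ S, E a x

lemma mem_neighbors [Fintype α] {E : ι → α → Prop} {S : Finset ι} {x : α} :
    x ∈ neighbors E S ↔ ∃ a ∈ S, E a x := by
  simp [neighbors]

variable [Fintype ι] [Fintype α] {E : ι → α → Prop}

lemma exists_direction_of_reflTransGen {γ : ι → α → ℝ} (hγE : ∀ a x, 0 < γ a x → E a x)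
    {a₀ a₁ : ι} (h : Relation.ReflTransGen (alternatingStep E γ) a₀ a₁) :
    ∃ Δ : ι → α → ℝ, (∀ a x, Δ a x < 0 → 0 < γ a x) ∧ (∀ a x, Δ a x ≠ 0 → E a x) ∧
      (∀ a, ∑ x, Δ a x = (if a = a₀ then 1 else 0) - (if a = a₁ then 1 else 0)) ∧
      ∀ x, ∑ a, Δ a x = 0 := by
  induction h with
  | refl => exact ⟨0, by simp, by simp, by simp, by simp⟩
  | @tail a₁ a₂ _ hstep ih =>
    obtain ⟨x, hE, hγ⟩ := hstep
    obtain ⟨Δ, hneg, hsupp, hrow, hcol⟩ := ih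
    refine ⟨Δ + unitEdge a₁ x - unitEdge a₂ x, fun a y h => ?_, fun a y h => ?_,
      fun a => ?_, fun y => ?_⟩
    · by_cases hy : a = a₂ ∧ y = x
      · obtain ⟨rfl, rfl⟩ := hy; exact hγ
      · refine hneg a y ?_
        simp only [Pi.add_apply, Pi.sub_apply, unitEdge, if_neg hy] at h
        split_ifs at h <;> linarith
    · by_contra hne
      have h₀ : Δ a y = 0 := not_imp_comm.1 (hsupp a y) hne
      have h₁ : ¬(a = a₁ ∧ y = x) := by rintro ⟨rfl, rfl⟩; exact hne hE
      have h₂ : ¬(a = a₂ ∧ y = x) := by rintro ⟨rfl, rfl⟩; exact hne (hγE _ _ hγ)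
      simp [unitEdge, h₀, h₁, h₂] at h
    · simp only [Pi.add_apply, Pi.sub_apply, sum_sub_distrib, sum_add_distrib, hrow,
        sum_unitEdge_row]
      ring
    · simp only [Pi.add_apply, Pi.sub_apply, sum_sub_distrib, sum_add_distrib, hcol,
        sum_unitEdge_col]
      ring

def fractionalMatchings (E : ι → α → Prop) (d : ι → ℝ) (b : α → ℝ) : Set (ι → α → ℝ) :=
  {γ | (∀ a x, 0 ≤ γ a x) ∧ (∀ a x, ¬E a x → γ a x = 0) ∧
    (∀ a, ∑ x, γ a x ≤ d a) ∧ (∀ x, ∑ a, γ a x ≤ b x)}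

lemma isCompact_fractionalMatchings (E : ι → α → Prop) (d : ι → ℝ) (b : α → ℝ) :
    IsCompact (fractionalMatchings E d b) := by
  refine (isCompact_Icc (a := 0) (b := fun a _ => d a)).of_isClosed_subset ?_
    fun γ ⟨hγ, _, hrow, _⟩ => ⟨hγ, fun a x => ?_⟩
  · simp only [fractionalMatchings, Set.ofPred_and, Set.ofPred_forall]
    repeat' first | apply IsClosed.inter | apply isClosed_iInter; intro
    all_goals first
      | exact isClosed_le (by fun_prop) (by fun_prop)
      | exact isClosed_eq (by fun_prop) (by fun_prop)
  · exact (single_le_sum (fun y _ => hγ a y) (mem_univ x)).trans (hrow a)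

variable {d : ι → ℝ} {b : α → ℝ} {γ : ι → α → ℝ}

lemma exists_add_smul_mem_fractionalMatchings {Δ : ι → α → ℝ}
    (hγ : γ ∈ fractionalMatchings E d b) (hneg : ∀ a x, Δ a x < 0 → 0 < γ a x)
    (hsupp : ∀ a x, Δ a x ≠ 0 → E a x) (hrow : ∀ a, ∑ x, Δ a x ≤ 0 ∨ ∑ x, γ a x < d a)
    (hcol : ∀ x, ∑ a, Δ a x ≤ 0 ∨ ∑ a, γ a x < b x) :
    ∃ t : ℝ, 0 < t ∧ γ + t • Δ ∈ fractionalMatchings E d b := by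
  obtain ⟨hnn, hγE, hγrow, hγcol⟩ := hγ
  have hnn' (a x) : ∀ᶠ t in 𝓝[>] 0, -γ a x + t * -Δ a x ≤ 0 := by
    refine eventually_nhdsGT_zero_add_mul_le (by linarith [hnn a x]) ?_
    rcases le_or_gt 0 (Δ a x) with h | h
    · exact .inl (by linarith)
    · exact .inr (by linarith [hneg a x h])
  have hrow' (a) := eventually_nhdsGT_zero_add_mul_le (hγrow a) (hrow a)
  have hcol' (x) := eventually_nhdsGT_zero_add_mul_le (hγcol x) (hcol x)
  obtain ⟨t, ⟨h0, hr, hc⟩, ht⟩ := (((eventually_all.2 fun a => eventually_all.2 (hnn' a)).and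
    ((eventually_all.2 hrow').and (eventually_all.2 hcol'))).and self_mem_nhdsWithin).exists
  refine ⟨t, ht, fun a x => ?_, fun a x h => ?_, fun a => ?_, fun x => ?_⟩
  · simp only [Pi.add_apply, Pi.smul_apply, smul_eq_mul]
    linarith [h0 a x]
  · simp [hγE a x h, not_imp_comm.1 (hsupp a x) h]
  · simpa [sum_add_distrib, mul_sum] using hr a
  · simpa [sum_add_distrib, mul_sum] using hc x

lemma sum_col_eq_of_isMaxOn (hγ : γ ∈ fractionalMatchings E d b)
    (hmax : IsMaxOn (fun γ => ∑ a, ∑ x, γ a x) (fractionalMatchings E d b) γ)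
    {a₀ a₁ : ι} {x₁ : α} (ha₀ : ∑ x, γ a₀ x < d a₀)
    (h : Relation.ReflTransGen (alternatingStep E γ) a₀ a₁) (hE : E a₁ x₁) :
    ∑ a, γ a x₁ = b x₁ := by
  refine (hγ.2.2.2 x₁).eq_of_not_lt fun hx₁ => ?_
  obtain ⟨Δ, hneg, hsupp, hrow, hcol⟩ := exists_direction_of_reflTransGen
    (fun a x h => by_contra fun hn => h.ne' (hγ.2.1 a x hn)) h
  set Δ' := Δ + unitEdge a₁ x₁
  have hrow' (a) : ∑ x, Δ' a x = if a = a₀ then 1 else 0 := by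
    simp [Δ', sum_add_distrib, hrow, sum_unitEdge_row]
  have hcol' (x) : ∑ a, Δ' a x = if x = x₁ then 1 else 0 := by
    simp [Δ', sum_add_distrib, hcol, sum_unitEdge_col]
  have hneg' (a x) (h : Δ' a x < 0) : 0 < γ a x := by
    refine hneg a x ?_
    have : 0 ≤ unitEdge a₁ x₁ a x := by unfold unitEdge; split_ifs <;> norm_num
    simp only [Δ', Pi.add_apply] at h
    linarith
  have hsupp' (a x) (h : Δ' a x ≠ 0) : E a x := by
    by_cases h₀ : Δ a x = 0
    · simp only [Δ', Pi.add_apply, h₀, zero_add, unitEdge] at h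
      obtain ⟨rfl, rfl⟩ := (ite_ne_right_iff.1 h).1
      exact hE
    · exact hsupp a x h₀
  obtain ⟨t, ht, hmem⟩ := exists_add_smul_mem_fractionalMatchings hγ hneg' hsupp'
    (fun a => by rw [hrow']; split_ifs with h; exacts [.inr (h ▸ ha₀), .inl le_rfl])
    (fun x => by rw [hcol']; split_ifs with h; exacts [.inr (h ▸ hx₁), .inl le_rfl])
  have htotal : ∑ a, ∑ x, (γ + t • Δ') a x = ∑ a, ∑ x, γ a x + t := by
    simp only [Pi.add_apply, Pi.smul_apply, smul_eq_mul, sum_add_distrib, ← mul_sum, hrow',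
      sum_ite_eq', mem_univ, if_true, mul_one]
  have hle : ∑ a, ∑ x, (γ + t • Δ') a x ≤ ∑ a, ∑ x, γ a x := hmax hmem
  linarith

lemma sum_row_eq_of_isMaxOn (hall : ∀ S, ∑ a ∈ S, d a ≤ ∑ x ∈ neighbors E S, b x)
    (hγ : γ ∈ fractionalMatchings E d b)
    (hmax : IsMaxOn (fun γ => ∑ a, ∑ x, γ a x) (fractionalMatchings E d b) γ) (a₀ : ι) :
    ∑ x, γ a₀ x = d a₀ := by
  have hnn := hγ.1
  have hrow := hγ.2.2.1
  refine (hrow a₀).eq_of_not_lt fun ha₀ => ?_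
  set X := univ.filter (Relation.ReflTransGen (alternatingStep E γ) a₀)
  set N := neighbors E X
  have hsat (x) (hx : x ∈ N) : ∑ a, γ a x = b x := by
    obtain ⟨a, ha, hE⟩ := mem_neighbors.1 hx
    exact sum_col_eq_of_isMaxOn hγ hmax ha₀ (mem_filter.1 ha).2 hE
  have hout (a) (ha : a ∉ X) (x) (hx : x ∈ N) : γ a x = 0 := by
    obtain ⟨a', ha', hE⟩ := mem_neighbors.1 hx
    refine (hnn a x).eq_of_not_lt' fun hpos => ha ?_
    exact mem_filter.2 ⟨mem_univ a, (mem_filter.1 ha').2.tail ⟨x, hE, hpos⟩⟩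
  have := calc ∑ a ∈ X, d a ≤ ∑ x ∈ N, b x := hall X
    _ = ∑ x ∈ N, ∑ a, γ a x := sum_congr rfl fun x hx => (hsat x hx).symm
    _ = ∑ a ∈ X, ∑ x ∈ N, γ a x := by
      rw [sum_comm]
      exact (sum_subset (subset_univ X) fun a _ ha => sum_eq_zero (hout a ha)).symm
    _ ≤ ∑ a ∈ X, ∑ x, γ a x :=
      sum_le_sum fun a _ => sum_le_sum_of_subset_of_nonneg (subset_univ N) fun x _ _ => hnn a x
    _ < ∑ a ∈ X, d a :=
      sum_lt_sum (fun a _ => hrow a) ⟨a₀, mem_filter.2 ⟨mem_univ a₀, .refl⟩, ha₀⟩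
  exact lt_irrefl _ this

theorem exists_fractionalMatching_of_hall (hd : ∀ a, 0 ≤ d a) (hb : ∀ x, 0 ≤ b x)
    (hall : ∀ S, ∑ a ∈ S, d a ≤ ∑ x ∈ neighbors E S, b x) :
    ∃ γ : ι → α → ℝ, (∀ a x, 0 ≤ γ a x) ∧ (∀ a x, γ a x ≠ 0 → E a x) ∧
      (∀ a, ∑ x, γ a x = d a) ∧ ∀ x, ∑ a, γ a x ≤ b x := by
  have hzero : (0 : ι → α → ℝ) ∈ fractionalMatchings E d b := by
    refine ⟨fun _ _ => le_rfl, fun _ _ _ => rfl, fun a => ?_, fun x => ?_⟩ <;> simp [hd, hb]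
  obtain ⟨γ, hγ, hmax⟩ := (isCompact_fractionalMatchings E d b).exists_isMaxOn ⟨0, hzero⟩
    (f := fun γ : ι → α → ℝ => ∑ a, ∑ x, γ a x) (by fun_prop : Continuous _).continuousOn
  exact ⟨γ, hγ.1, fun a x h => by_contra fun hE => h (hγ.2.1 a x hE),
    sum_row_eq_of_isMaxOn hall hγ hmax, hγ.2.2.2⟩

end WeightedHall

open WeightedHall in
lemma sum_negPart_le_sum_posPart_neighbors {R : Type*} [Fintype R] [PartialOrder R]
    {ρ : R → ℝ} (hF : ∀ S : Finset R, 0 ≤ ∑ t ∈ neighbors (· ≤ ·) S, ρ t) (S : Finset R) :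
    ∑ s ∈ S, (ρ s)⁻ ≤ ∑ t ∈ neighbors (fun s t => s < t ∧ ρ s < 0 ∧ 0 < ρ t) S, (ρ t)⁺ := by
  set S' := S.filter (ρ · < 0)
  set F := neighbors (· ≤ ·) S'
  have hpos : F.filter (0 < ρ ·) ⊆ neighbors (fun s t => s < t ∧ ρ s < 0 ∧ 0 < ρ t) S := by
    intro t ht
    obtain ⟨htF, hρt⟩ := mem_filter.1 ht
    obtain ⟨s, hs, hst⟩ := mem_neighbors.1 htF
    obtain ⟨hs, hρs⟩ := mem_filter.1 hs
    exact mem_neighbors.2 ⟨s, hs, hst.lt_of_ne (by rintro rfl; linarith), hρs, hρt⟩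
  have hF' : 0 ≤ ∑ t ∈ F, (ρ t)⁺ - ∑ t ∈ F, (ρ t)⁻ := by
    simpa only [← sum_sub_distrib, posPart_sub_negPart] using hF S'
  calc ∑ s ∈ S, (ρ s)⁻ = ∑ s ∈ S', (ρ s)⁻ :=
        (sum_filter_of_ne fun s _ h => negPart_pos_iff.1 ((negPart_nonneg _).lt_of_ne' h)).symm
    _ ≤ ∑ t ∈ F, (ρ t)⁻ :=
        sum_le_sum_of_subset_of_nonneg (fun s hs => mem_neighbors.2 ⟨s, hs, le_rfl⟩)
          fun _ _ _ => negPart_nonneg _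
    _ ≤ ∑ t ∈ F, (ρ t)⁺ := by linarith
    _ = ∑ t ∈ F.filter (0 < ρ ·), (ρ t)⁺ :=
        (sum_filter_of_ne fun t _ h => posPart_pos_iff.1 ((posPart_nonneg _).lt_of_ne' h)).symm
    _ ≤ _ := sum_le_sum_of_subset_of_nonneg hpos fun _ _ _ => posPart_nonneg _

/-- Key combinatorial step for concavity of the reweighted Kikuchi entropy: if the weights
`ρ` on a finite poset of regions satisfy `Σ_{t ∈ F(S)} ρ_t ≥ 0` for every subset `S`
(where `F(S)` is the upward closure of `S`), then in the bipartite graph on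
`V₁ = {ρ < 0}`, `V₂ = {ρ > 0}` with edges `s < t`, there exists a nonnegative edge labeling
`γ` with row sums `−ρ_s` on `V₁` and column sums at most `ρ_t` on `V₂`. -/
theorem stmt13 {R : Type*} [Fintype R] [PartialOrder R] (ρ : R → ℝ)
    (hF : ∀ S : Finset R,
      0 ≤ ∑ t ∈ Finset.univ.filter (fun t => ∃ s ∈ S, s ≤ t), ρ t) :
    ∃ γ : R × R → ℝ,
      (∀ p, 0 ≤ γ p) ∧
      (∀ s t, γ (s, t) ≠ 0 → s < t ∧ ρ s < 0 ∧ 0 < ρ t) ∧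
      (∀ s, ρ s < 0 →
        ∑ t ∈ Finset.univ.filter (fun t => s < t ∧ 0 < ρ t), γ (s, t) = -ρ s) ∧
      (∀ t, 0 < ρ t →
        ∑ s ∈ Finset.univ.filter (fun s => s < t ∧ ρ s < 0), γ (s, t) ≤ ρ t) := by
  obtain ⟨γ, hnn, hE, hrow, hcol⟩ := WeightedHall.exists_fractionalMatching_of_hall
    (fun s => negPart_nonneg (ρ s)) (fun t => posPart_nonneg (ρ t))
    (sum_negPart_le_sum_posPart_neighbors hF)
  refine ⟨fun p => γ p.1 p.2, fun p => hnn _ _, hE, fun s hs => ?_, fun t ht => ?_⟩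
  · rw [sum_filter_of_ne fun t _ h => ⟨(hE s t h).1, (hE s t h).2.2⟩, hrow,
      negPart_eq_neg.2 hs.le]
  · rw [sum_filter_of_ne fun s _ h => ⟨(hE s t h).1, (hE s t h).2.1⟩]
    exact (hcol t).trans_eq (posPart_eq_self.2 ht.le)
end

section
/- Let H(τ; ρ) = Σ_{r∈R} ρ_r H_r(τ_r) be the reweighted Kikuchi entropy over a finite region graph, where H_r(τ_r) = −Σ_{x_r} τ_r(x_r) log τ_r(x_r). Suppose there exists a nonnegative labeling γ on pairs (s,t) with s ⊊ t, ρ_s < 0, ρ_t > 0, such that Σ_t γ(s,t) = −ρ_s for all s with ρ_s < 0 and Σ_s γ(s,t) ≤ ρ_t for all t with ρ_t > 0. Then on the locally consistent polytope Δ_R^K, H(τ;ρ) can be written as a nonnegative combination of terms −D_KL(τ_t ‖ τ_s) (over pairs s ⊊ t, marginalization-consistent) plus nonnegative multiples of entropies H_t(τ_t), and hence H(τ;ρ) is concave on Δ_R^K. -/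
/-!
Write `H_r(τ) = -∑ τ_r log τ_r`. On `Δ_R^K` marginalization gives
`D_KL(τ_t ‖ τ_s) = H_s(τ) - H_t(τ)` for `s ⊆ t`, so reading `γ` as a flow from the negatively
weighted regions to the positively weighted ones,
`H(τ; ρ) = ∑ γ(s,t) (-D_KL(τ_t ‖ τ_s)) + ∑ c_t H_t(τ)` with `c_t = ρ_t + ∑_u γ(t,u) - ∑_s γ(s,t)`.
The row condition makes `c_s = 0` at the sources and the column condition makes `c_t ≥ 0` at the
sinks. Concavity follows because `D_KL` is jointly convex (the log-sum inequality) and every `H_t`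
is concave.
-/

open scoped Classical

noncomputable section

variable {V 𝒳 : Type*}

/-- Restriction of a configuration on region `t` to region `s` (for `s ⊆ t`;
outside `t` an arbitrary value is used). -/
def restr [Nonempty 𝒳] (s t : Finset V) (z : ↥t → 𝒳) : ↥s → 𝒳 :=
  fun a => if h : (a : V) ∈ t then z ⟨a, h⟩ else Classical.arbitrary 𝒳

/-- The locally consistent pseudomarginal polytope `Δ_R^K` over a region graph `R`:
each `τ_r` (`r ∈ R`) is a probability distribution on `𝒳^r`, and the distributions are
consistent under marginalization for all pairs `s ⊆ t` in `R`. -/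
def Delta [Fintype V] [Fintype 𝒳] [Nonempty 𝒳] (R : Finset (Finset V)) :
    Set (∀ r : Finset V, (↥r → 𝒳) → ℝ) :=
  {τ | ∀ r ∈ R, (∀ y, 0 ≤ τ r y) ∧ (∑ y, τ r y = 1) ∧
      ∀ s ∈ R, s ⊆ r → ∀ y,
        τ s y = ∑ z ∈ Finset.univ.filter (fun z => restr s r z = y), τ r z}

/-- The reweighted Kikuchi entropy `H(τ; ρ) = Σ_{r ∈ R} ρ_r H_r(τ_r)`. -/
def kikuchiEntropy [Fintype V] [Fintype 𝒳] (R : Finset (Finset V))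
    (ρ : Finset V → ℝ) (τ : ∀ r : Finset V, (↥r → 𝒳) → ℝ) : ℝ :=
  ∑ r ∈ R, ρ r * (-∑ y, τ r y * Real.log (τ r y))

/-- The KL divergence `D_KL(τ_t ‖ τ_s) = Σ_{x_t} τ_t(x_t) log (τ_t(x_t) / τ_s(x_s))`
between the marginals on `t` and on `s ⊆ t`. -/
def klTerm [Fintype V] [Fintype 𝒳] [Nonempty 𝒳] (s t : Finset V)
    (τ : ∀ r : Finset V, (↥r → 𝒳) → ℝ) : ℝ :=
  ∑ z, τ t z * Real.log (τ t z / τ s (restr s t z))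

/-- The two-term log-sum inequality. -/
theorem add_mul_log_div_add_le {p₁ p₂ q₁ q₂ : ℝ} (hp₁ : 0 ≤ p₁) (hp₂ : 0 ≤ p₂)
    (hq₁ : 0 ≤ q₁) (hq₂ : 0 ≤ q₂) (h₁ : q₁ = 0 → p₁ = 0) (h₂ : q₂ = 0 → p₂ = 0) :
    (p₁ + p₂) * Real.log ((p₁ + p₂) / (q₁ + q₂)) ≤
      p₁ * Real.log (p₁ / q₁) + p₂ * Real.log (p₂ / q₂) := by
  rcases hq₁.eq_or_lt with rfl | hq₁
  · simp [h₁ rfl]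
  rcases hq₂.eq_or_lt with rfl | hq₂
  · simp [h₂ rfl]
  -- Jensen for `x log x` at the points `pᵢ / qᵢ` with weights `qᵢ / (q₁ + q₂)`.
  set Q := q₁ + q₂
  have hQ : 0 < Q := by positivity
  have h := Real.convexOn_mul_log.2 (Set.mem_Ici.2 (div_nonneg hp₁ hq₁.le))
    (Set.mem_Ici.2 (div_nonneg hp₂ hq₂.le)) (div_nonneg hq₁.le hQ.le) (div_nonneg hq₂.le hQ.le)
    (by rw [← add_div, div_self hQ.ne'])
  have hmean : q₁ / Q * (p₁ / q₁) + q₂ / Q * (p₂ / q₂) = (p₁ + p₂) / Q := by field_simp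
  simp only [smul_eq_mul, hmean] at h
  calc (p₁ + p₂) * Real.log ((p₁ + p₂) / Q)
      = Q * ((p₁ + p₂) / Q * Real.log ((p₁ + p₂) / Q)) := by field_simp
    _ ≤ Q * (q₁ / Q * (p₁ / q₁ * Real.log (p₁ / q₁)) +
          q₂ / Q * (p₂ / q₂ * Real.log (p₂ / q₂))) := mul_le_mul_of_nonneg_left h hQ.le
    _ = p₁ * Real.log (p₁ / q₁) + p₂ * Real.log (p₂ / q₂) := by field_simp

theorem concaveOn_finset_sum {ι E : Type*} [AddCommGroup E] [Module ℝ E] {S : Set E}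
    (hS : Convex ℝ S) {t : Finset ι} {f : ι → E → ℝ} (hf : ∀ i ∈ t, ConcaveOn ℝ S (f i)) :
    ConcaveOn ℝ S (fun x => ∑ i ∈ t, f i x) := by
  induction t using Finset.induction_on with
  | empty => simpa using concaveOn_const 0 hS
  | insert i t hi ih =>
    simp only [Finset.sum_insert hi]
    exact (hf i (Finset.mem_insert_self i t)).add
      (ih fun j hj => hf j (Finset.mem_insert_of_mem hj))

section Residual

variable {ι : Type*}

def residualWeight (R : Finset ι) (ρ : ι → ℝ) (γ : ι × ι → ℝ) (t : ι) : ℝ :=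
  ρ t + ∑ u ∈ R, γ (t, u) - ∑ s ∈ R, γ (s, t)

theorem sum_mul_eq_sum_sum_mul_sub_add (R : Finset ι) (ρ E : ι → ℝ) (γ : ι × ι → ℝ) :
    ∑ r ∈ R, ρ r * E r =
      ∑ s ∈ R, ∑ t ∈ R, γ (s, t) * (E t - E s) + ∑ t ∈ R, residualWeight R ρ γ t * E t := by
  simp only [residualWeight, mul_sub, add_mul, sub_mul, Finset.sum_add_distrib,
    Finset.sum_sub_distrib, Finset.sum_mul]
  rw [Finset.sum_comm (f := fun s t => γ (s, t) * E t)]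
  ring

theorem residualWeight_nonneg {R : Finset ι} {ρ : ι → ℝ} {γ : ι × ι → ℝ}
    (hsign : ∀ s t, γ (s, t) ≠ 0 → ρ s < 0 ∧ 0 < ρ t)
    (hrow : ∀ s ∈ R, ρ s < 0 → ∑ t ∈ R, γ (s, t) = -ρ s)
    (hcol : ∀ t ∈ R, 0 < ρ t → ∑ s ∈ R, γ (s, t) ≤ ρ t) {t : ι} (ht : t ∈ R) :
    0 ≤ residualWeight R ρ γ t := by
  have hin : ρ t ≤ 0 → ∑ s ∈ R, γ (s, t) = 0 := fun h =>
    Finset.sum_eq_zero fun s _ => by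
      by_contra hne
      linarith [(hsign s t hne).2]
  have hout : 0 ≤ ρ t → ∑ u ∈ R, γ (t, u) = 0 := fun h =>
    Finset.sum_eq_zero fun u _ => by
      by_contra hne
      linarith [(hsign t u hne).1]
  unfold residualWeight
  rcases lt_or_ge (ρ t) 0 with h | h
  · rw [hrow t ht h, hin h.le]
    simp
  · rcases h.eq_or_lt with h | h
    · rw [hin h.ge, hout h.le, ← h]
      simp
    · linarith [hout h.le, hcol t ht h]

end Residual

section Region

variable [Fintype V] [Fintype 𝒳] [Nonempty 𝒳] {R : Finset (Finset V)}

def regionEntropy (r : Finset V) (τ : ∀ r : Finset V, (↥r → 𝒳) → ℝ) : ℝ :=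
  -∑ y, τ r y * Real.log (τ r y)

variable {τ : ∀ r : Finset V, (↥r → 𝒳) → ℝ}

theorem convex_Delta : Convex ℝ (Delta (𝒳 := 𝒳) R) := by
  intro τ hτ σ hσ a b ha hb hab r hr
  obtain ⟨hτ₀, hτ₁, hτc⟩ := hτ r hr
  obtain ⟨hσ₀, hσ₁, hσc⟩ := hσ r hr
  simp only [Pi.add_apply, Pi.smul_apply, smul_eq_mul]
  refine ⟨fun y => by positivity [hτ₀ y, hσ₀ y], ?_, fun s hs hsr y => ?_⟩
  · rw [Finset.sum_add_distrib, ← Finset.mul_sum, ← Finset.mul_sum, hτ₁, hσ₁, mul_one, mul_one,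
      hab]
  · rw [hτc s hs hsr y, hσc s hs hsr y, Finset.sum_add_distrib, Finset.mul_sum, Finset.mul_sum]

theorem le_apply_restr_of_mem_Delta (hτ : τ ∈ Delta R) {s t : Finset V} (hs : s ∈ R)
    (ht : t ∈ R) (hst : s ⊆ t) (z : ↥t → 𝒳) : τ t z ≤ τ s (restr s t z) := by
  obtain ⟨hτ₀, -, hτc⟩ := hτ t ht
  rw [hτc s hs hst]
  exact Finset.single_le_sum (fun z _ => hτ₀ z) (Finset.mem_filter.2 ⟨Finset.mem_univ z, rfl⟩)

theorem klTerm_eq_of_mem_Delta (hτ : τ ∈ Delta R) {s t : Finset V} (hs : s ∈ R) (ht : t ∈ R)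
    (hst : s ⊆ t) : klTerm s t τ = regionEntropy s τ - regionEntropy t τ := by
  obtain ⟨hτ₀, -, hτc⟩ := hτ t ht
  have hlog : klTerm s t τ =
      ∑ z, τ t z * Real.log (τ t z) - ∑ z, τ t z * Real.log (τ s (restr s t z)) := by
    rw [klTerm, ← Finset.sum_sub_distrib]
    refine Finset.sum_congr rfl fun z _ => ?_
    rcases (hτ₀ z).eq_or_lt with hz | hz
    · simp [← hz]
    · have hsz := hz.trans_le (le_apply_restr_of_mem_Delta hτ hs ht hst z)
      rw [Real.log_div hz.ne' hsz.ne']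
      ring
  have hmarg : ∑ z, τ t z * Real.log (τ s (restr s t z)) = ∑ y, τ s y * Real.log (τ s y) := by
    rw [← Finset.sum_fiberwise Finset.univ (restr s t)]
    refine Finset.sum_congr rfl fun y _ => ?_
    have hfibre : ∀ z ∈ Finset.univ.filter (fun z => restr s t z = y),
        τ t z * Real.log (τ s (restr s t z)) = τ t z * Real.log (τ s y) :=
      fun z hz => by rw [(Finset.mem_filter.1 hz).2]
    rw [Finset.sum_congr rfl hfibre, ← Finset.sum_mul, ← hτc s hs hst y]
  rw [hlog, hmarg, regionEntropy, regionEntropy]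
  ring

theorem convexOn_klTerm {s t : Finset V} (hs : s ∈ R) (ht : t ∈ R) (hst : s ⊆ t) :
    ConvexOn ℝ (Delta (𝒳 := 𝒳) R) (klTerm s t) := by
  refine ⟨convex_Delta, fun τ hτ σ hσ a b ha hb hab => ?_⟩
  simp only [klTerm, smul_eq_mul, Finset.mul_sum, ← Finset.sum_add_distrib]
  refine Finset.sum_le_sum fun z _ => ?_
  simp only [Pi.add_apply, Pi.smul_apply, smul_eq_mul]
  have scale : ∀ {c : ℝ} (p q : ℝ), c * p * Real.log (c * p / (c * q)) =
      c * (p * Real.log (p / q)) := fun {c} p q => by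
    rcases eq_or_ne c 0 with rfl | hc
    · simp
    · rw [mul_div_mul_left p q hc, mul_assoc]
  have dominated : ∀ {c : ℝ} {p q : ℝ}, 0 ≤ c → 0 ≤ p → p ≤ q → c * q = 0 → c * p = 0 :=
    fun hc hp hpq h => le_antisymm (h ▸ mul_le_mul_of_nonneg_left hpq hc) (mul_nonneg hc hp)
  have hτ₀ := (hτ t ht).1 z
  have hσ₀ := (hσ t ht).1 z
  have := add_mul_log_div_add_le (mul_nonneg ha hτ₀) (mul_nonneg hb hσ₀)
    (mul_nonneg ha ((hτ s hs).1 _)) (mul_nonneg hb ((hσ s hs).1 _))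
    (dominated ha hτ₀ (le_apply_restr_of_mem_Delta hτ hs ht hst z))
    (dominated hb hσ₀ (le_apply_restr_of_mem_Delta hσ hs ht hst z))
  rwa [scale, scale] at this

theorem concaveOn_regionEntropy {r : Finset V} (hr : r ∈ R) :
    ConcaveOn ℝ (Delta (𝒳 := 𝒳) R) (regionEntropy r) := by
  have hneg : regionEntropy (𝒳 := 𝒳) r = fun τ => ∑ y, Real.negMulLog (τ r y) := by
    ext τ
    simp [regionEntropy, Real.negMulLog]
  rw [hneg]
  refine concaveOn_finset_sum convex_Delta fun y _ => ?_
  let eval : (∀ r : Finset V, (↥r → 𝒳) → ℝ) →ₗ[ℝ] ℝ :=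
    (LinearMap.proj (φ := fun _ : ↥r → 𝒳 => ℝ) y).comp
      (LinearMap.proj (φ := fun r : Finset V => (↥r → 𝒳) → ℝ) r)
  exact (Real.concaveOn_negMulLog.comp_linearMap eval).subset
    (fun τ hτ => Set.mem_Ici.2 ((hτ r hr).1 y)) convex_Delta

theorem kikuchiEntropy_eq_of_mem_Delta {ρ : Finset V → ℝ} {γ : Finset V × Finset V → ℝ}
    (hsub : ∀ s ∈ R, ∀ t ∈ R, γ (s, t) ≠ 0 → s ⊆ t) (hτ : τ ∈ Delta R) :
    kikuchiEntropy R ρ τ = ∑ s ∈ R, ∑ t ∈ R, γ (s, t) * -klTerm s t τ +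
      ∑ t ∈ R, residualWeight R ρ γ t * regionEntropy t τ := by
  rw [show kikuchiEntropy R ρ τ = ∑ r ∈ R, ρ r * regionEntropy r τ from rfl,
    sum_mul_eq_sum_sum_mul_sub_add R ρ (regionEntropy · τ) γ]
  congr 1
  refine Finset.sum_congr rfl fun s hs => Finset.sum_congr rfl fun t ht => ?_
  rcases eq_or_ne (γ (s, t)) 0 with h | h
  · simp [h]
  · rw [klTerm_eq_of_mem_Delta hτ hs ht (hsub s hs t ht h), neg_sub]

theorem concaveOn_sum_mul_neg_klTerm {γ : Finset V × Finset V → ℝ} (hγ : ∀ p, 0 ≤ γ p)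
    (hsub : ∀ s ∈ R, ∀ t ∈ R, γ (s, t) ≠ 0 → s ⊆ t) :
    ConcaveOn ℝ (Delta (𝒳 := 𝒳) R) fun τ => ∑ s ∈ R, ∑ t ∈ R, γ (s, t) * -klTerm s t τ := by
  refine concaveOn_finset_sum convex_Delta fun s hs =>
    concaveOn_finset_sum convex_Delta fun t ht => ?_
  rcases eq_or_ne (γ (s, t)) 0 with h | h
  · simpa [h] using concaveOn_const 0 convex_Delta
  · exact (convexOn_klTerm hs ht (hsub s hs t ht h)).neg.smul (hγ (s, t))

end Region

/-- If there is a nonnegative labeling `γ` on pairs `s ⊊ t` with `ρ_s < 0 < ρ_t`, row sums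
`−ρ_s` and column sums at most `ρ_t`, then on `Δ_R^K` the Kikuchi entropy `H(τ; ρ)` is a
nonnegative combination of terms `−D_KL(τ_t ‖ τ_s)` plus nonnegative multiples of
entropies `H_t(τ_t)`, and hence `H(·; ρ)` is concave on `Δ_R^K`. -/
theorem stmt14 [Fintype V] [Fintype 𝒳] [Nonempty 𝒳]
    (R : Finset (Finset V)) (ρ : Finset V → ℝ) (γ : Finset V × Finset V → ℝ)
    (hγ0 : ∀ p, 0 ≤ γ p)
    (hsupp : ∀ s t, γ (s, t) ≠ 0 → s ∈ R ∧ t ∈ R ∧ s ⊂ t ∧ ρ s < 0 ∧ 0 < ρ t)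
    (hrow : ∀ s ∈ R, ρ s < 0 → ∑ t ∈ R, γ (s, t) = -ρ s)
    (hcol : ∀ t ∈ R, 0 < ρ t → ∑ s ∈ R, γ (s, t) ≤ ρ t) :
    (∃ c : Finset V → ℝ, (∀ t, 0 ≤ c t) ∧
      ∀ τ ∈ Delta (𝒳 := 𝒳) R,
        kikuchiEntropy R ρ τ =
          (∑ s ∈ R, ∑ t ∈ R, γ (s, t) * (-(klTerm s t τ))) +
            ∑ t ∈ R, c t * (-∑ y, τ t y * Real.log (τ t y))) ∧
    ConcaveOn ℝ (Delta (𝒳 := 𝒳) R) (kikuchiEntropy R ρ) := by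
  have hsub : ∀ s ∈ R, ∀ t ∈ R, γ (s, t) ≠ 0 → s ⊆ t :=
    fun s _ t _ h => (hsupp s t h).2.2.1.subset
  let c : Finset V → ℝ := fun t => if t ∈ R then residualWeight R ρ γ t else 0
  have hc : ∀ t, 0 ≤ c t := fun t => by
    by_cases ht : t ∈ R
    · simpa [c, ht] using
        residualWeight_nonneg (fun s t h => (hsupp s t h).2.2.2) hrow hcol ht
    · simp [c, ht]
  have hdecomp : ∀ τ ∈ Delta (𝒳 := 𝒳) R, kikuchiEntropy R ρ τ =
      ∑ s ∈ R, ∑ t ∈ R, γ (s, t) * -klTerm s t τ + ∑ t ∈ R, c t * regionEntropy t τ := by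
    intro τ hτ
    rw [kikuchiEntropy_eq_of_mem_Delta hsub hτ]
    congr 1
    exact Finset.sum_congr rfl fun t ht => by simp [c, ht]
  refine ⟨⟨c, hc, hdecomp⟩, ConcaveOn.congr ?_ fun τ hτ => (hdecomp τ hτ).symm⟩
  exact (concaveOn_sum_mul_neg_klTerm hγ0 hsub).add
    (concaveOn_finset_sum convex_Delta fun t ht => (concaveOn_regionEntropy ht).smul (hc t))
end
end

section
/- In a two-layer region graph (Bethe case) with vertex set V and factor set F (each α ∈ F a subset of V with |α| ≥ 2), if ρ_α ≥ 0 for all α ∈ F and Σ_{s∈U} ρ_s + Σ_{α∈F : α∩U≠∅} ρ_α ≥ 0 for all U ⊆ V, then the Kikuchi sufficient condition Σ_{r ∈ F(S)} ρ_r ≥ 0 holds for all subsets S of R = V ∪ F, where F(S) is the upward closure of S under inclusion. -/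
/-! The regions of `S` are nonempty (factors have at least two elements), so the singletons in
`F(S)` are exactly the `{s} ∈ S`. With `U` the set of those `s`, every factor meeting `U` lies
in `F(S)`, and the other factors of `F(S)` carry nonnegative weight; hence the Kikuchi sum over
`F(S)` dominates the sum in the hypothesis for `U`. -/

open Finset

namespace BetheRegionGraph

variable {V : Type*} [DecidableEq V]

def upClosure (R S : Finset (Finset V)) : Finset (Finset V) :=
  R.filter fun r => ∃ s ∈ S, s ⊆ r

lemma upClosure_union (R₁ R₂ S : Finset (Finset V)) :
    upClosure (R₁ ∪ R₂) S = upClosure R₁ S ∪ upClosure R₂ S :=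
  filter_union _ _ _

lemma upClosure_image_singleton {S : Finset (Finset V)} {B : Finset V}
    (hS : ∀ t ∈ S, t.Nonempty) :
    upClosure (B.image singleton) S = (B.filter fun v => {v} ∈ S).image singleton := by
  ext r
  simp only [upClosure, mem_filter, mem_image]
  constructor
  · rintro ⟨⟨v, hv, rfl⟩, t, htS, htv⟩
    exact ⟨v, ⟨hv, (hS t htS).subset_singleton_iff.1 htv ▸ htS⟩, rfl⟩
  · rintro ⟨v, ⟨hv, hvS⟩, rfl⟩
    exact ⟨⟨v, hv, rfl⟩, {v}, hvS, Subset.rfl⟩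

lemma filter_inter_nonempty_subset_upClosure {F S : Finset (Finset V)} {U : Finset V}
    (hU : ∀ v ∈ U, {v} ∈ S) :
    F.filter (fun α => (α ∩ U).Nonempty) ⊆ upClosure F S := by
  intro α hα
  obtain ⟨hαF, v, hv⟩ := mem_filter.1 hα
  exact mem_filter.2 ⟨hαF, {v}, hU v (mem_inter.1 hv).2,
    singleton_subset_iff.2 (mem_inter.1 hv).1⟩

lemma disjoint_image_singleton_of_two_le_card {F : Finset (Finset V)}
    (hF : ∀ α ∈ F, 2 ≤ α.card) (B : Finset V) : Disjoint (B.image singleton) F := by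
  rw [disjoint_left]
  rintro _ hr hrF
  obtain ⟨v, -, rfl⟩ := mem_image.1 hr
  simpa using hF _ hrF

lemma nonempty_of_mem_image_singleton_union {F : Finset (Finset V)}
    (hF : ∀ α ∈ F, 2 ≤ α.card) (B : Finset V) {r : Finset V} (hr : r ∈ B.image singleton ∪ F) :
    r.Nonempty := by
  rcases mem_union.1 hr with hr | hr
  · obtain ⟨v, -, rfl⟩ := mem_image.1 hr
    exact singleton_nonempty v
  · exact card_pos.1 (by linarith [hF r hr])

end BetheRegionGraph

open BetheRegionGraph in
/-- In a two-layer region graph (Bethe case) with vertices `V` and factors `F` (each of size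
at least 2), if `ρ_α ≥ 0` for all factors and
`Σ_{s ∈ U} ρ_s + Σ_{α ∩ U ≠ ∅} ρ_α ≥ 0` for all `U ⊆ V`, then the general Kikuchi
sufficient condition `Σ_{r ∈ F(S)} ρ_r ≥ 0` holds for every subset `S` of `R = V ∪ F`,
where `F(S)` is the upward closure of `S` under inclusion. -/
theorem stmt16 {V : Type*} [Fintype V] [DecidableEq V] (F : Finset (Finset V))
    (hF : ∀ α ∈ F, 2 ≤ α.card) (ρ : Finset V → ℝ)
    (h1 : ∀ α ∈ F, 0 ≤ ρ α)
    (h2 : ∀ U : Finset V,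
      0 ≤ ∑ s ∈ U, ρ {s} + ∑ α ∈ F.filter (fun α => (α ∩ U).Nonempty), ρ α) :
    ∀ S ⊆ (Finset.univ.image (fun s : V => ({s} : Finset V)) ∪ F),
      0 ≤ ∑ r ∈ (Finset.univ.image (fun s : V => ({s} : Finset V)) ∪ F).filter
            (fun r => ∃ s ∈ S, s ⊆ r), ρ r := by
  intro S hS
  set U : Finset V := univ.filter fun v => {v} ∈ S
  have hSne : ∀ t ∈ S, t.Nonempty := fun t ht => nonempty_of_mem_image_singleton_union hF _ (hS ht)
  have hdisj : Disjoint (upClosure (univ.image singleton) S) (upClosure F S) :=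
    (disjoint_image_singleton_of_two_le_card hF univ).mono (filter_subset _ _) (filter_subset _ _)
  calc (0 : ℝ) ≤ ∑ s ∈ U, ρ {s} + ∑ α ∈ F.filter (fun α => (α ∩ U).Nonempty), ρ α := h2 U
    _ ≤ ∑ s ∈ U, ρ {s} + ∑ α ∈ upClosure F S, ρ α := by
      have hsub : F.filter (fun α => (α ∩ U).Nonempty) ⊆ upClosure F S :=
        filter_inter_nonempty_subset_upClosure fun v hv => (mem_filter.1 hv).2
      exact add_le_add_right
        (sum_le_sum_of_subset_of_nonneg hsub fun α hα _ => h1 α (filter_subset _ _ hα)) _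
    _ = ∑ r ∈ upClosure (univ.image singleton) S, ρ r + ∑ α ∈ upClosure F S, ρ α := by
      rw [upClosure_image_singleton (B := univ) hSne, sum_image singleton_injective.injOn]
    _ = ∑ r ∈ upClosure (univ.image singleton ∪ F) S, ρ r := by
      rw [upClosure_union, sum_union hdisj]
end

section
/- If the Bethe entropy H(τ;ρ) = Σ_{s∈V} ρ_s H_s(τ_s) + Σ_{α∈F} ρ_α H_α(τ_α) is concave over the locally consistent polytope Δ_R^K of a two-layer binary region graph, then ρ_α ≥ 0 for every factor α ∈ F. -/
open scoped Classical

/-!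
Fix a factor `α` and restrict `H(·; ρ)` to the pseudomarginals that are uniform everywhere except
at `τ_α`, where `τ_α` ranges over distributions on `{±1}^α` with uniform one-site marginals. This
slice is the image of an affine map into `Δ_R^K`, and on it `H = C + ρ_α H_α(τ_α)`. The entropy
`H_α` is strictly concave, and since `|α| ≥ 2` the slice contains two distinct points: the uniform
distribution and the equal mixture of the two constant configurations. So `ρ_α H_α` can only be
concave on the slice if `ρ_α ≥ 0`.
-/

open Finset Real

noncomputable section

section Entropy

variable {κ : Type*} [Fintype κ]

def entropy (w : κ → ℝ) : ℝ := -∑ z, w z * log (w z)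

lemma entropy_eq_sum_negMulLog (w : κ → ℝ) : entropy w = ∑ z, negMulLog (w z) := by
  simp only [entropy, negMulLog, neg_mul, sum_neg_distrib]

lemma StrictConcaveOn.sum_comp_apply {s : Set ℝ} {f : ℝ → ℝ} (hf : StrictConcaveOn ℝ s f) :
    StrictConcaveOn ℝ (Set.univ.pi fun _ : κ => s) fun w => ∑ i, f (w i) := by
  refine ⟨convex_pi fun _ _ => hf.1, fun x hx y hy hxy a b ha hb hab => ?_⟩
  obtain ⟨i, hi⟩ := Function.ne_iff.mp hxy
  simp only [smul_eq_mul, mul_sum, ← sum_add_distrib, Pi.add_apply, Pi.smul_apply]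
  refine sum_lt_sum (fun j _ => ?_) ⟨i, mem_univ i, hf.2 (hx i trivial) (hy i trivial) hi ha hb hab⟩
  exact hf.concaveOn.2 (hx j trivial) (hy j trivial) ha.le hb.le hab

lemma strictConcaveOn_entropy :
    StrictConcaveOn ℝ (Set.univ.pi fun _ : κ => Set.Ici 0) (entropy : (κ → ℝ) → ℝ) := by
  rw [show (entropy : (κ → ℝ) → ℝ) = fun w => ∑ z, negMulLog (w z) from
    funext entropy_eq_sum_negMulLog]
  exact strictConcaveOn_negMulLog.sum_comp_apply

end Entropy

lemma nonneg_of_concaveOn_const_add_mul {E : Type*} [AddCommGroup E] [Module ℝ E] {s : Set E}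
    {g : E → ℝ} {C c : ℝ} (hf : ConcaveOn ℝ s fun x => C + c * g x)
    (hg : StrictConcaveOn ℝ s g) {x y : E} (hx : x ∈ s) (hy : y ∈ s) (hxy : x ≠ y) : 0 ≤ c := by
  by_contra! hc
  have hmid := hf.2 hx hy (by norm_num : (0 : ℝ) ≤ 1 / 2) (by norm_num : (0 : ℝ) ≤ 1 / 2)
    (by norm_num)
  have hstrict := hg.2 hx hy hxy (by norm_num : (0 : ℝ) < 1 / 2) (by norm_num : (0 : ℝ) < 1 / 2)
    (by norm_num)
  simp only [smul_eq_mul] at hmid hstrict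
  nlinarith

section BinaryConfigurations

variable {ι : Type*} [Fintype ι] [DecidableEq ι]

def HasUniformMarginals (w : (ι → Bool) → ℝ) : Prop :=
  (∀ z, 0 ≤ w z) ∧ ∑ z, w z = 1 ∧
    ∀ i x, ∑ z ∈ univ.filter (fun z : ι → Bool => z i = x), w z = 1 / 2

variable (ι) in
def uniformDist (_ : ι → Bool) : ℝ := ((2 : ℝ) ^ Fintype.card ι)⁻¹

variable (ι) in
def constMixture (z : ι → Bool) : ℝ := ∑ b : Bool, if z = Function.const ι b then 1 / 2 else 0

lemma card_filter_apply_eq (i : ι) (x : Bool) :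
    #(univ.filter fun z : ι → Bool => z i = x) = 2 ^ (Fintype.card ι - 1) := by
  have h := Fintype.card_filter_piFinset_const_eq_of_mem (univ : Finset Bool) i (mem_univ x)
  rwa [Fintype.piFinset_univ, card_univ, Fintype.card_bool] at h

lemma hasUniformMarginals_uniformDist : HasUniformMarginals (uniformDist ι) := by
  refine ⟨fun _ => by unfold uniformDist; positivity, by simp [uniformDist], fun i x => ?_⟩
  have : Nonempty ι := ⟨i⟩
  simp only [uniformDist]
  rw [sum_const, card_filter_apply_eq, nsmul_eq_mul, ← pow_sub_one_mul Fintype.card_ne_zero (2 : ℝ)]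
  push_cast
  field_simp

lemma hasUniformMarginals_constMixture : HasUniformMarginals (constMixture ι) := by
  refine ⟨fun _ => sum_nonneg fun _ _ => by split_ifs <;> norm_num, ?_, fun i x => ?_⟩
  all_goals
    simp only [constMixture]
    rw [sum_comm]
    simp [eq_comm]

lemma constMixture_ne_uniformDist {i j : ι} (hij : i ≠ j) : constMixture ι ≠ uniformDist ι := by
  intro h
  have hz := congrFun h fun t => decide (t = i)
  have hne : ∀ b, (fun t => decide (t = i)) ≠ Function.const ι b := fun b hb => by
    have hi := congrFun hb i
    have hj := congrFun hb j
    simp_all [Ne.symm hij]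
  simp only [constMixture, uniformDist, hne, if_false, sum_const_zero] at hz
  exact (inv_pos.mpr (by positivity : (0 : ℝ) < 2 ^ Fintype.card ι)).ne hz

end BinaryConfigurations

section Bethe

variable {V : Type*} [DecidableEq V]

abbrev Pseudomarginals (V : Type*) := (V → Bool → ℝ) × (∀ α : Finset V, (↥α → Bool) → ℝ)

def localPolytope (F : Finset (Finset V)) : Set (Pseudomarginals V) :=
  {τ | (∀ s, (∀ x, 0 ≤ τ.1 s x) ∧ ∑ x, τ.1 s x = 1) ∧
    ∀ α ∈ F, (∀ z, 0 ≤ τ.2 α z) ∧ (∑ z, τ.2 α z = 1) ∧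
      ∀ s : ↥α, ∀ x, τ.1 s.1 x = ∑ z ∈ univ.filter (fun z : ↥α → Bool => z s = x), τ.2 α z}

def betheEntropy [Fintype V] (F : Finset (Finset V)) (ρv : V → ℝ) (ρf : Finset V → ℝ)
    (τ : Pseudomarginals V) : ℝ :=
  ∑ s, ρv s * entropy (τ.1 s) + ∑ α ∈ F, ρf α * entropy (τ.2 α)

def replaceFactor (τ : Pseudomarginals V) (α : Finset V) :
    ((↥α → Bool) → ℝ) →ᵃ[ℝ] Pseudomarginals V where
  toFun w := (τ.1, Function.update τ.2 α w)
  linear := (LinearMap.inr ℝ _ _).comp (LinearMap.single ℝ (fun β : Finset V => (↥β → Bool) → ℝ) α)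
  map_vadd' w v := by
    refine Prod.ext (by simp) (funext fun β => ?_)
    rcases eq_or_ne β α with rfl | h
    · simp
    · simp [h]

lemma replaceFactor_apply (τ : Pseudomarginals V) (α : Finset V) (w : (↥α → Bool) → ℝ) :
    replaceFactor τ α w = (τ.1, Function.update τ.2 α w) :=
  rfl

lemma betheEntropy_replaceFactor [Fintype V] {F : Finset (Finset V)} (ρv : V → ℝ)
    (ρf : Finset V → ℝ) (τ : Pseudomarginals V) {α : Finset V} (hα : α ∈ F)
    (w : (↥α → Bool) → ℝ) :
    betheEntropy F ρv ρf (replaceFactor τ α w) =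
      (∑ s, ρv s * entropy (τ.1 s) + ∑ β ∈ F.erase α, ρf β * entropy (τ.2 β)) +
        ρf α * entropy w := by
  have hrest : ∑ β ∈ F.erase α, ρf β * entropy (Function.update τ.2 α w β) =
      ∑ β ∈ F.erase α, ρf β * entropy (τ.2 β) :=
    sum_congr rfl fun β hβ => by rw [Function.update_of_ne (ne_of_mem_erase hβ)]
  rw [betheEntropy, replaceFactor_apply, ← sum_erase_add F _ hα]
  dsimp only
  rw [Function.update_self, hrest]
  ring

def uniformPseudomarginals (V : Type*) : Pseudomarginals V :=
  (fun _ _ => 1 / 2, fun α => uniformDist ↥α)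

lemma replaceFactor_uniformPseudomarginals_mem_localPolytope {F : Finset (Finset V)}
    {α : Finset V} {w : (↥α → Bool) → ℝ} (hw : HasUniformMarginals w) :
    replaceFactor (uniformPseudomarginals V) α w ∈ localPolytope F := by
  refine ⟨fun s => ⟨fun x => by norm_num [replaceFactor_apply, uniformPseudomarginals],
    by norm_num [replaceFactor_apply, uniformPseudomarginals]⟩, fun β _ => ?_⟩
  obtain ⟨hnonneg, hsum, hmarg⟩ :
      HasUniformMarginals (Function.update (uniformPseudomarginals V).2 α w β) := by
    rcases eq_or_ne β α with rfl | h
    · rwa [Function.update_self]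
    · rw [Function.update_of_ne h]
      exact hasUniformMarginals_uniformDist
  exact ⟨hnonneg, hsum, fun s x => (hmarg s x).symm⟩

end Bethe

/-- Necessity of factor-weight nonnegativity: if the Bethe entropy
`H(τ; ρ) = Σ_{s ∈ V} ρ_s H_s(τ_s) + Σ_{α ∈ F} ρ_α H_α(τ_α)` is concave over the locally
consistent polytope `Δ_R^K` of a two-layer binary region graph, then `ρ_α ≥ 0` for every
factor `α ∈ F`. -/
theorem stmt17 {V : Type*} [Fintype V] [DecidableEq V] (F : Finset (Finset V))
    (hF : ∀ α ∈ F, 2 ≤ α.card) (ρv : V → ℝ) (ρf : Finset V → ℝ)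
    (hconc : ConcaveOn ℝ
      {τ : (V → Bool → ℝ) × (∀ α : Finset V, (↥α → Bool) → ℝ) |
        (∀ s, (∀ x, 0 ≤ τ.1 s x) ∧ ∑ x, τ.1 s x = 1) ∧
        ∀ α ∈ F, (∀ z, 0 ≤ τ.2 α z) ∧ (∑ z, τ.2 α z = 1) ∧
          ∀ s : ↥α, ∀ x, τ.1 s.1 x =
            ∑ z ∈ Finset.univ.filter (fun z : ↥α → Bool => z s = x), τ.2 α z}
      (fun τ =>
        ∑ s, ρv s * (-∑ x, τ.1 s x * Real.log (τ.1 s x)) +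
          ∑ α ∈ F, ρf α * (-∑ z, τ.2 α z * Real.log (τ.2 α z)))) :
    ∀ α ∈ F, 0 ≤ ρf α := by
  intro α hα
  have : Nontrivial ↥α := Set.nontrivial_coe_sort.mpr (one_lt_card_iff_nontrivial.mp (hF α hα))
  obtain ⟨i, j, hij⟩ := exists_pair_ne ↥α
  set φ := replaceFactor (uniformPseudomarginals V) α
  have hbethe : ConcaveOn ℝ (localPolytope F) (betheEntropy F ρv ρf) := hconc
  have hslice := hbethe.comp_affineMap φ
  simp only [Function.comp_def, φ, betheEntropy_replaceFactor ρv ρf _ hα] at hslice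
  have hnonneg : φ ⁻¹' localPolytope F ⊆ Set.univ.pi fun _ => Set.Ici 0 :=
    fun w hw z _ => by simpa [φ, replaceFactor_apply] using (hw.2 α hα).1 z
  exact nonneg_of_concaveOn_const_add_mul hslice (strictConcaveOn_entropy.subset hnonneg hslice.1)
    (replaceFactor_uniformPseudomarginals_mem_localPolytope hasUniformMarginals_constMixture)
    (replaceFactor_uniformPseudomarginals_mem_localPolytope hasUniformMarginals_uniformDist)
    (constMixture_ne_uniformDist hij)

end
end
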